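/- arXiv:1103.5916 — 4 statements merged into one kernel-verified Lean document; each statement's English description precedes it below -/
import Mathlib

section
/- Let N be a net and P a GR-process of N. Then ⌊P⌋ := ↓{⟦P'⟧ | P' ≤ P, P' finite} is a BD-run of N, i.e. it is prefix-closed and directed under the lifted prefix relation on ≈s*-equivalence classes of finite processes. -/
open scoped Classical

noncomputable section

/-- A place/transition net: `pre t s` and `post t s` are the arc weights
`F(s,t)` and `F(t,s)` of the flow relation, and `M0` is the initial marking.
Every transition has a finite non-empty set of preplaces and a finite set of
postplaces. -/
structure Net (S : Type*) (T : Type*) where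
  pre : T → S → ℕ
  post : T → S → ℕ
  M0 : S → ℕ
  pre_fin : ∀ t, {s | pre t s ≠ 0}.Finite
  pre_ne : ∀ t, ∃ s, pre t s ≠ 0
  post_fin : ∀ t, {s | post t s ≠ 0}.Finite

namespace Net

variable {S T : Type*}

/-- `•G`: the multiset of preplaces of a finite multiset `G` of transitions,
as a function `S → ℕ`. -/
def preM (N : Net S T) (G : Multiset T) (s : S) : ℕ :=
  (G.map fun t => N.pre t s).sum

/-- `G•`: the multiset of postplaces of a finite multiset `G` of transitions. -/
def postM (N : Net S T) (G : Multiset T) (s : S) : ℕ :=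
  (G.map fun t => N.post t s).sum

/-- The (non-empty, finite) multiset `G` of transitions is enabled in marking `M`. -/
def Enabled (N : Net S T) (M : S → ℕ) (G : Multiset T) : Prop :=
  G ≠ 0 ∧ ∀ s, N.preM G s ≤ M s

/-- `G` is a step from `M` to `M'`. -/
def Step (N : Net S T) (M : S → ℕ) (G : Multiset T) (M' : S → ℕ) : Prop :=
  N.Enabled M G ∧ ∀ s, M' s = M s - N.preM G s + N.postM G s

/-- `M →σ M'`: sequential firing of the word `σ` of transitions. -/
def FireSeq (N : Net S T) : (S → ℕ) → List T → (S → ℕ) → Prop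
  | M, [], M' => M' = M
  | M, t :: σ, M' => ∃ M₁, N.Step M {t} M₁ ∧ N.FireSeq M₁ σ M'

/-- `σ` is a firing sequence of `N`. -/
def FS (N : Net S T) (σ : List T) : Prop := ∃ M', N.FireSeq N.M0 σ M'

/-- `M` is reachable from the initial marking. -/
def Reachable (N : Net S T) (M : S → ℕ) : Prop := ∃ σ, N.FireSeq N.M0 σ M

/-- Two firing sequences are adjacent iff they differ only in the exchange of
two neighbouring transitions that could have been fired in one step. -/
def Adjacent (N : Net S T) (σ ρ : List T) : Prop :=
  N.FS σ ∧ N.FS ρ ∧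
    ∃ (σ₁ : List T) (t u : T) (σ₂ : List T) (M : S → ℕ),
      σ = σ₁ ++ t :: u :: σ₂ ∧ ρ = σ₁ ++ u :: t :: σ₂ ∧
      N.FireSeq N.M0 σ₁ M ∧ N.Enabled M (t ::ₘ {u})

/-- `↔*`: the reflexive transitive closure of adjacency. -/
def AdjEquiv (N : Net S T) : List T → List T → Prop :=
  Relation.ReflTransGen N.Adjacent

/-- A structural conflict net: transitions that can occur together in a step
never share a preplace. -/
def StructuralConflictNet (N : Net S T) : Prop :=
  ∀ t u : T, (∃ M, N.Reachable M ∧ N.Enabled M (t ::ₘ {u})) →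
    ∀ s, N.pre t s = 0 ∨ N.pre u s = 0

/-- The finite non-empty multiset `G` of transitions is in (semantic) conflict
in the marking `M`: every `G↾{t}` is enabled but `G` itself is not. -/
def InConflict (N : Net S T) (M : S → ℕ) (G : Multiset T) : Prop :=
  G ≠ 0 ∧ (∀ t ∈ G, N.Enabled M (Multiset.replicate (G.count t) t)) ∧
    ¬ N.Enabled M G

/-- `N` is (semantic) conflict-free. -/
def ConflictFree (N : Net S T) : Prop :=
  ∀ M, N.Reachable M → ∀ G : Multiset T, ¬ N.InConflict M G

end Net

/-- The type of firing sequences of `N`. -/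
def FSeq {S T : Type*} (N : Net S T) := {σ : List T // N.FS σ}

/-- Partial FS-runs: `↔*`-equivalence classes of firing sequences. -/
def PartialFSRun {S T : Type*} (N : Net S T) :=
  Quot (fun σ ρ : FSeq N => N.AdjEquiv σ.1 ρ.1)

/-- `[σ]`, the `↔*`-equivalence class of a firing sequence. -/
def fsClass {S T : Type*} (N : Net S T) (σ : FSeq N) : PartialFSRun N :=
  Quot.mk _ σ

/-- The prefix order on partial FS-runs: `[σ] ≤ [ρ]` iff
`∃ μ, σ ≤ μ ↔* ρ`. -/
def fsRunLE {S T : Type*} (N : Net S T) (x y : PartialFSRun N) : Prop :=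
  ∃ σ ρ : FSeq N, fsClass N σ = x ∧ fsClass N ρ = y ∧
    ∃ μ : List T, σ.1 <+: μ ∧ N.AdjEquiv μ ρ.1

/-- An FS-run: a prefix-closed and directed set of partial FS-runs. -/
def IsFSRun {S T : Type*} (N : Net S T) (R : Set (PartialFSRun N)) : Prop :=
  (∀ x y, fsRunLE N x y → y ∈ R → x ∈ R) ∧
  (∀ x ∈ R, ∀ y ∈ R, ∃ z ∈ R, fsRunLE N x z ∧ fsRunLE N y z)

/-- An FS-run `R` is conflict-free iff whenever, for every `t` in a finite
non-empty multiset `G`, the class of `σ t^{G(t)}` belongs to `R` and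
`M₀ →σ →(G↾{t})`, then `M₀ →σ →G`. -/
def ConflictFreeFSRun {S T : Type*} (N : Net S T)
    (R : Set (PartialFSRun N)) : Prop :=
  ∀ (G : Multiset T) (σ : List T), G ≠ 0 →
    (∀ t ∈ G,
      (∃ h : N.FS (σ ++ List.replicate (G.count t) t),
        fsClass N ⟨σ ++ List.replicate (G.count t) t, h⟩ ∈ R) ∧
      ∃ M, N.FireSeq N.M0 σ M ∧
        N.Enabled M (Multiset.replicate (G.count t) t)) →
    ∃ M, N.FireSeq N.M0 σ M ∧ N.Enabled M G

/-- The raw data of a candidate (GR-)process of a net with places `S` and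
transitions `T`: an occurrence net whose places are drawn from `α` and whose
transitions are drawn from `β`, together with the projections to `S` and `T`. -/
structure RawProc (S T α β : Type*) where
  places : Set α
  transitions : Set β
  flowPT : α → β → ℕ
  flowTP : β → α → ℕ
  initMark : α → ℕ
  projS : α → S
  projT : β → T

namespace RawProc

variable {S T α β : Type*}

/-- The flow relation of the occurrence net, as a relation on `α ⊕ β`. -/
def flowRel (P : RawProc S T α β) : (α ⊕ β) → (α ⊕ β) → Prop := fun x y =>
  match x, y with
  | Sum.inl p, Sum.inr t => P.flowPT p t ≠ 0
  | Sum.inr t, Sum.inl p => P.flowTP t p ≠ 0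
  | _, _ => False

/-- `F⁺`, the transitive closure of the flow relation. -/
def causal (P : RawProc S T α β) : (α ⊕ β) → (α ⊕ β) → Prop :=
  Relation.TransGen P.flowRel

/-- `P` is finite iff its set of transitions is finite. -/
def FiniteProc (P : RawProc S T α β) : Prop := P.transitions.Finite

/-- `Q` is a prefix of `P` (written `Q ≤ P`): the places and transitions of `Q`
are included in those of `P`, the initial markings coincide, and flow relation
and projection of `Q` are the restrictions of those of `P`. -/
def IsPrefix (Q P : RawProc S T α β) : Prop :=
  Q.places ⊆ P.places ∧ Q.transitions ⊆ P.transitions ∧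
  Q.initMark = P.initMark ∧
  (∀ p ∈ Q.places, ∀ t ∈ Q.transitions,
    Q.flowPT p t = P.flowPT p t ∧ Q.flowTP t p = P.flowTP t p) ∧
  (∀ p ∈ Q.places, Q.projS p = P.projS p) ∧
  (∀ t ∈ Q.transitions, Q.projT t = P.projT t)

/-- Isomorphism of processes of the same net: a bijection between places and
between transitions preserving flow, initial marking and the projections. -/
def Iso (P Q : RawProc S T α β) : Prop :=
  ∃ (fS : α → α) (fT : β → β),
    Set.BijOn fS P.places Q.places ∧ Set.BijOn fT P.transitions Q.transitions ∧
    (∀ p ∈ P.places, ∀ t ∈ P.transitions,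
      Q.flowPT (fS p) (fT t) = P.flowPT p t ∧
      Q.flowTP (fT t) (fS p) = P.flowTP t p) ∧
    (∀ p ∈ P.places, Q.initMark (fS p) = P.initMark p) ∧
    (∀ p ∈ P.places, Q.projS (fS p) = P.projS p) ∧
    (∀ t ∈ P.transitions, Q.projT (fT t) = P.projT t)

/-- `swap(P,p,q)`: exchange the outgoing arcs of the places `p` and `q`. -/
def swap (P : RawProc S T α β) (p q : α) : RawProc S T α β :=
  { P with flowPT := fun x t =>
      if x = p then P.flowPT q t
      else if x = q then P.flowPT p t
      else P.flowPT x t }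

/-- One step swapping equivalence `P ≈s Q`: `swap(P,p,q)` is isomorphic to `Q`
for some causally unrelated places `p`, `q` with the same image in the net. -/
def SwapStep (P Q : RawProc S T α β) : Prop :=
  ∃ p q : α, p ∈ P.places ∧ q ∈ P.places ∧ P.projS p = P.projS q ∧
    ¬ P.causal (Sum.inl p) (Sum.inl q) ∧ ¬ P.causal (Sum.inl q) (Sum.inl p) ∧
    Iso (P.swap p q) Q

/-- `≈s*`: the reflexive transitive closure of one step swapping equivalence. -/
def SwapEquiv : RawProc S T α β → RawProc S T α β → Prop :=
  Relation.ReflTransGen SwapStep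

/-- `Lin(P)`: the linearisations of a finite process `P`, i.e. the images under
the projection of the enumerations of its transitions compatible with `F*`. -/
def Lin (P : RawProc S T α β) : Set (List T) :=
  { σ | ∃ ts : List β, ts.Nodup ∧ (∀ t : β, t ∈ ts ↔ t ∈ P.transitions) ∧
      (∀ (i j : ℕ) (hi : i < ts.length) (hj : j < ts.length),
        Relation.ReflTransGen P.flowRel
          (Sum.inr (ts.get ⟨i, hi⟩)) (Sum.inr (ts.get ⟨j, hj⟩)) → i ≤ j) ∧
      σ = ts.map P.projT }

end RawProc

/-- `P` is a (GR-)process of the net `N`: its underlying net is an occurrence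
net (unbranched places, acyclic flow, finite causal pasts, transitions with
finite non-empty presets and finite postsets), the flow, initial marking and
projections are normalised to vanish outside the places/transitions, and the
projection maps the process onto `N` respecting initial marking and arc
weights (counted via the preimages of the projection). -/
structure IsProcessOf {S T α β : Type*} (N : Net S T)
    (P : RawProc S T α β) : Prop where
  flowPT_dom : ∀ p t, P.flowPT p t ≠ 0 → p ∈ P.places ∧ t ∈ P.transitions
  flowTP_dom : ∀ t p, P.flowTP t p ≠ 0 → p ∈ P.places ∧ t ∈ P.transitions
  initMark_dom : ∀ p, p ∉ P.places → P.initMark p = 0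
  pre_place : ∀ p ∈ P.places,
    {t | P.flowTP t p ≠ 0}.Subsingleton ∧ ∀ t, P.flowTP t p ≤ 1
  post_place : ∀ p ∈ P.places,
    {t | P.flowPT p t ≠ 0}.Subsingleton ∧ ∀ t, P.flowPT p t ≤ 1
  init_one : ∀ p ∈ P.places, (∀ t, P.flowTP t p = 0) → P.initMark p = 1
  init_zero : ∀ p ∈ P.places, (∃ t, P.flowTP t p ≠ 0) → P.initMark p = 0
  acyclic : ∀ x, ¬ P.causal x x
  finite_past : ∀ t ∈ P.transitions,
    {u : β | P.causal (Sum.inr u) (Sum.inr t)}.Finite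
  t_pre_fin : ∀ t ∈ P.transitions, {p | P.flowPT p t ≠ 0}.Finite
  t_pre_ne : ∀ t ∈ P.transitions, ∃ p, P.flowPT p t ≠ 0
  t_post_fin : ∀ t ∈ P.transitions, {p | P.flowTP t p ≠ 0}.Finite
  proj_init_fin : ∀ s : S, {p | P.projS p = s ∧ P.initMark p ≠ 0}.Finite
  proj_init : ∀ s : S, (∑ᶠ p ∈ {p | P.projS p = s}, P.initMark p) = N.M0 s
  proj_pre : ∀ t ∈ P.transitions, ∀ s : S,
    (∑ᶠ p ∈ {p | P.projS p = s}, P.flowPT p t) = N.pre (P.projT t) s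
  proj_post : ∀ t ∈ P.transitions, ∀ s : S,
    (∑ᶠ p ∈ {p | P.projS p = s}, P.flowTP t p) = N.post (P.projT t) s

/-- The type of finite GR-processes of `N` with places in `α` and transitions
in `β`. -/
def FinProcOf {S T : Type*} (N : Net S T) (α β : Type*) :=
  {P : RawProc S T α β // IsProcessOf N P ∧ P.FiniteProc}

/-- Partial BD-runs: `≈s*`-equivalence classes of finite GR-processes. -/
def PartialBDRun {S T : Type*} (N : Net S T) (α β : Type*) :=
  Quot (fun P Q : FinProcOf N α β => RawProc.SwapEquiv P.1 Q.1)

/-- `⟦P⟧`, the `≈s*`-equivalence class of a finite process. -/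
def bdClass {S T α β : Type*} (N : Net S T) (P : FinProcOf N α β) :
    PartialBDRun N α β :=
  Quot.mk _ P

/-- The lifted prefix relation on `≈s*`-equivalence classes:
`⟦P⟧ ≤ ⟦Q⟧` iff `P ≈s* P' ≤ Q' ≈s* Q` for some `P'`, `Q'`. -/
def bdRunLE {S T α β : Type*} (N : Net S T)
    (x y : PartialBDRun N α β) : Prop :=
  ∃ P Q : FinProcOf N α β, bdClass N P = x ∧ bdClass N Q = y ∧
    ∃ P' Q' : RawProc S T α β,
      RawProc.SwapEquiv P.1 P' ∧ RawProc.IsPrefix P' Q' ∧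
      RawProc.SwapEquiv Q' Q.1

/-- A BD-run: a prefix-closed and directed set of partial BD-runs. -/
def IsBDRun {S T α β : Type*} (N : Net S T)
    (R : Set (PartialBDRun N α β)) : Prop :=
  (∀ x y, bdRunLE N x y → y ∈ R → x ∈ R) ∧
  (∀ x ∈ R, ∀ y ∈ R, ∃ z ∈ R, bdRunLE N x z ∧ bdRunLE N y z)

/-- `⌊P⌋ = ↓{⟦P'⟧ | P' ≤ P, P' finite}`: the prefix-closure of the set of
classes of finite prefixes of the process `P`. -/
def BDify {S T α β : Type*} (N : Net S T) (P : RawProc S T α β) :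
    Set (PartialBDRun N α β) :=
  { x | ∃ Q : FinProcOf N α β, RawProc.IsPrefix Q.1 P ∧ bdRunLE N x (bdClass N Q) }

/-- Swapping equivalence `P ≈s∞ Q` of (possibly infinite) processes:
`↓{⟦P'⟧ | P' ≤ P, P' finite} = ↓{⟦Q'⟧ | Q' ≤ Q, Q' finite}`. -/
def SwapEquivInf {S T α β : Type*} (N : Net S T)
    (P Q : RawProc S T α β) : Prop :=
  BDify N P = BDify N Q

/-- A canonical carrier type, large enough to host every GR-process of a net
with places `S` and transitions `T`. -/
abbrev BigCarrier (S T : Type*) := Set ((S ⊕ T) × ℕ)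

end
/-!
Prefix-closedness of `⌊P⌋` is transitivity of the lifted prefix order; directedness holds because
two finite prefixes of `P` lie in their union, again a finite prefix of `P`.

Transitivity amounts to moving a prefix across a swapping chain: from `X ≤ Y ≈s* Y' ≤ Z` we need
`X ≈s* X' ≤ Z' ≈s* Z`. Since arc weights are prescribed by the net, the prefix `Y'` contains all
pre- and postplaces of its transitions and all producers of its places, i.e. it is a causally
closed region of `Z`. Such an embedding pulls back along a swap step `Y ≈s Y₁`: exchanging the
outgoing arcs of two independent places of `Y` is mirrored by exchanging those of their images,
which remain independent because a causally closed region reflects causality. Along the chain this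
embeds `Y`, and with it `X`, into some `Z' ≈s* Z`. The chain from `Y` to `Y'` passes through two
representatives of one class, which are linked by a zigzag; it straightens out because `≈s*` is
symmetric on processes.
-/

open Set

lemma Set.InjOn.swap_apply {γ δ : Type*} {f : γ → δ} {s : Set γ} (hf : InjOn f s)
    {a b x : γ} (ha : a ∈ s) (hb : b ∈ s) (hx : x ∈ s) :
    Equiv.swap (f a) (f b) (f x) = f (Equiv.swap a b x) := by
  by_cases hxa : x = a
  · subst hxa; simp
  by_cases hxb : x = b
  · subst hxb; simp
  rw [Equiv.swap_apply_of_ne_of_ne hxa hxb, Equiv.swap_apply_of_ne_of_ne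
    (fun h => hxa (hf hx ha h)) (fun h => hxb (hf hx hb h))]

lemma Set.BijOn.exists_invOn {γ : Type*} {f : γ → γ} {s t : Set γ} (h : BijOn f s t) :
    ∃ g, InvOn g f s t := by
  rcases isEmpty_or_nonempty γ with hγ | hγ
  · exact ⟨id, fun x => isEmptyElim x, fun x => isEmptyElim x⟩
  · exact ⟨_, h.invOn_invFunOn⟩

lemma swap_apply_mem_pair {γ : Type*} {p q a : γ} (ha : a ∈ ({p, q} : Set γ)) :
    Equiv.swap p q a ∈ ({p, q} : Set γ) := by
  rcases ha with rfl | rfl <;> simp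

lemma Set.BijOn.inter_setOf_eq_image {γ δ : Type*} {f : γ → δ} {s : Set γ} {t : Set δ}
    (h : BijOn f s t) {p : δ → Prop} {q : γ → Prop} (hpq : ∀ x ∈ s, p (f x) ↔ q x) :
    t ∩ {y | p y} = f '' (s ∩ {x | q x}) := by
  ext y
  constructor
  · rintro ⟨hy, hpy⟩
    obtain ⟨x, hx, rfl⟩ := h.surjOn hy
    exact ⟨x, ⟨hx, (hpq x hx).1 hpy⟩, rfl⟩
  · rintro ⟨x, ⟨hx, hqx⟩, rfl⟩
    exact ⟨h.mapsTo hx, (hpq x hx).2 hqx⟩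

lemma Equiv.swap_apply_mem_iff {γ : Type*} [DecidableEq γ] {s : Set γ} {p q x : γ}
    (hp : p ∈ s) (hq : q ∈ s) : Equiv.swap p q x ∈ s ↔ x ∈ s :=
  ⟨fun h => by simpa using (Equiv.bijOn_swap hp hq).mapsTo h,
    fun h => (Equiv.bijOn_swap hp hq).mapsTo h⟩

lemma eq_zero_of_finsum_mem_eq_of_subset {γ : Type*} {f : γ → ℕ} {s t : Set γ}
    (hst : s ⊆ t) (ht : (t ∩ Function.support f).Finite)
    (heq : ∑ᶠ x ∈ s, f x = ∑ᶠ x ∈ t, f x) {b : γ} (hbt : b ∈ t) (hbs : b ∉ s) :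
    f b = 0 := by
  have hsplit :
      ∑ᶠ x ∈ t, f x = f b + ∑ᶠ x ∈ s, f x + ∑ᶠ x ∈ t \ insert b s, f x := by
    rw [← finsum_mem_insert' f hbs (ht.subset (inter_subset_inter_left _ hst)),
      ← finsum_mem_union' disjoint_sdiff_right
        (ht.subset (inter_subset_inter_left _ (insert_subset hbt hst)))
        (ht.subset (inter_subset_inter_left _ sdiff_subset)),
      union_sdiff_cancel (insert_subset hbt hst)]
  omega

namespace RawProc

variable {S T α β : Type*}

section Swap

variable (P : RawProc S T α β) (p q : α)

@[simp] lemma swap_places : (P.swap p q).places = P.places := rfl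
@[simp] lemma swap_transitions : (P.swap p q).transitions = P.transitions := rfl
@[simp] lemma swap_flowTP : (P.swap p q).flowTP = P.flowTP := rfl
@[simp] lemma swap_projS : (P.swap p q).projS = P.projS := rfl
@[simp] lemma swap_projT : (P.swap p q).projT = P.projT := rfl

lemma swap_flowPT (x : α) (t : β) :
    (P.swap p q).flowPT x t = P.flowPT (Equiv.swap p q x) t := by
  simp only [swap, Equiv.swap_apply_def]
  split_ifs <;> rfl

@[simp] lemma swap_swap : (P.swap p q).swap p q = P := by
  have h : ((P.swap p q).swap p q).flowPT = P.flowPT := by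
    funext x t; simp [swap_flowPT]
  cases P
  exact congrArg (fun F => RawProc.mk _ _ F _ _ _ _) h

@[simp] lemma swap_self : P.swap p p = P := by
  have h : (P.swap p p).flowPT = P.flowPT := by
    funext x t; simp [swap_flowPT]
  cases P
  exact congrArg (fun F => RawProc.mk _ _ F _ _ _ _) h

lemma flowRel_swap (u v : α ⊕ β) :
    (P.swap p q).flowRel u v ↔ P.flowRel (Sum.map (Equiv.swap p q) id u) v := by
  rcases u with x | t <;> rcases v with y | u <;> simp [flowRel, swap_flowPT]

end Swap

def IsNode (P : RawProc S T α β) : α ⊕ β → Prop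
  | .inl x => x ∈ P.places
  | .inr t => t ∈ P.transitions

def FlowSupported (P : RawProc S T α β) : Prop :=
  (∀ x t, P.flowPT x t ≠ 0 → x ∈ P.places ∧ t ∈ P.transitions) ∧
  (∀ t x, P.flowTP t x ≠ 0 → x ∈ P.places ∧ t ∈ P.transitions)

def IsAcyclic (P : RawProc S T α β) : Prop := ∀ x, ¬ P.causal x x

lemma FlowSupported.isNode_of_flowRel {P : RawProc S T α β} (hP : P.FlowSupported)
    {u v : α ⊕ β} (h : P.flowRel u v) : P.IsNode v := by
  rcases u with x | t <;> rcases v with y | u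
  exacts [h.elim, (hP.1 x u h).2, (hP.2 t y h).1, h.elim]

section Restrict

noncomputable def restrict (P : RawProc S T α β) (pl : Set α) (tr : Set β) :
    RawProc S T α β :=
  { P with
    places := pl
    transitions := tr
    flowPT := fun x t => if x ∈ pl ∧ t ∈ tr then P.flowPT x t else 0
    flowTP := fun t x => if x ∈ pl ∧ t ∈ tr then P.flowTP t x else 0 }

/-- `P` with the arcs outside its places and transitions deleted; `Iso` and `IsPrefix` do not
see those arcs, but `causal` does. -/
noncomputable abbrev normalize (P : RawProc S T α β) : RawProc S T α β :=
  P.restrict P.places P.transitions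

variable {P : RawProc S T α β} {pl : Set α} {tr : Set β}

lemma restrict_flowPT_of_mem {x : α} {t : β} (hx : x ∈ pl) (ht : t ∈ tr) :
    (P.restrict pl tr).flowPT x t = P.flowPT x t := if_pos ⟨hx, ht⟩

lemma restrict_flowTP_of_mem {x : α} {t : β} (hx : x ∈ pl) (ht : t ∈ tr) :
    (P.restrict pl tr).flowTP t x = P.flowTP t x := if_pos ⟨hx, ht⟩

lemma normalize_flowPT_of_mem {x : α} {t : β} (hx : x ∈ P.places) (ht : t ∈ P.transitions) :
    P.normalize.flowPT x t = P.flowPT x t := restrict_flowPT_of_mem hx ht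

lemma normalize_flowTP_of_mem {x : α} {t : β} (hx : x ∈ P.places) (ht : t ∈ P.transitions) :
    P.normalize.flowTP t x = P.flowTP t x := restrict_flowTP_of_mem hx ht

lemma restrict_flowPT_le (x : α) (t : β) : (P.restrict pl tr).flowPT x t ≤ P.flowPT x t := by
  simp only [restrict]; split_ifs <;> omega

lemma restrict_flowTP_le (t : β) (x : α) : (P.restrict pl tr).flowTP t x ≤ P.flowTP t x := by
  simp only [restrict]; split_ifs <;> omega

lemma flowPT_ne_zero_of_restrict {x : α} {t : β} (h : (P.restrict pl tr).flowPT x t ≠ 0) :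
    P.flowPT x t ≠ 0 :=
  fun h0 => h (Nat.le_zero.1 (h0 ▸ restrict_flowPT_le x t))

lemma flowTP_ne_zero_of_restrict {x : α} {t : β} (h : (P.restrict pl tr).flowTP t x ≠ 0) :
    P.flowTP t x ≠ 0 :=
  fun h0 => h (Nat.le_zero.1 (h0 ▸ restrict_flowTP_le t x))

lemma flowSupported_restrict : (P.restrict pl tr).FlowSupported := by
  constructor
  · intro x t h; by_contra hc; exact h (if_neg hc)
  · intro t x h; by_contra hc; exact h (if_neg hc)

lemma causal_of_causal_restrict {u v : α ⊕ β} (h : (P.restrict pl tr).causal u v) :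
    P.causal u v := by
  refine Relation.TransGen.mono (fun u v huv => ?_) _ _ h
  rcases u with x | t <;> rcases v with y | u
  exacts [huv.elim, flowPT_ne_zero_of_restrict huv, flowTP_ne_zero_of_restrict huv, huv.elim]

lemma normalize_eq_self (hP : P.FlowSupported) : P.normalize = P := by
  have hPT : P.normalize.flowPT = P.flowPT := by
    funext x t
    by_cases h : x ∈ P.places ∧ t ∈ P.transitions
    · exact if_pos h
    · exact (if_neg h).trans (by_contra fun h0 => h (hP.1 x t (Ne.symm h0)))
  have hTP : P.normalize.flowTP = P.flowTP := by
    funext t x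
    by_cases h : x ∈ P.places ∧ t ∈ P.transitions
    · exact if_pos h
    · exact (if_neg h).trans (by_contra fun h0 => h (hP.2 t x (Ne.symm h0)))
  cases P
  simp only [restrict] at hPT hTP ⊢
  rw [hPT, hTP]

lemma normalize_swap {p q : α} (hp : p ∈ P.places) (hq : q ∈ P.places) :
    (P.swap p q).normalize = P.normalize.swap p q := by
  have h : (P.swap p q).normalize.flowPT = (P.normalize.swap p q).flowPT := by
    funext x t
    simp only [restrict, swap_flowPT, swap_places, swap_transitions,
      Equiv.swap_apply_mem_iff hp hq]
  cases P
  exact congrArg (fun F => RawProc.mk _ _ F _ _ _ _) h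

lemma isPrefix_restrict (hpl : pl ⊆ P.places) (htr : tr ⊆ P.transitions) :
    IsPrefix (P.restrict pl tr) P :=
  ⟨hpl, htr, rfl, fun _ hx _ ht => ⟨if_pos ⟨hx, ht⟩, if_pos ⟨hx, ht⟩⟩,
    fun _ _ => rfl, fun _ _ => rfl⟩

end Restrict

section SwapCausal

variable {P : RawProc S T α β} {p q : α}

lemma sum_map_swap_eq_self {x : α ⊕ β} (hx : ¬ ∃ a ∈ ({p, q} : Set α), x = .inl a) :
    Sum.map (Equiv.swap p q) id x = x := by
  rcases x with a | t
  · rw [Sum.map_inl, Equiv.swap_apply_of_ne_of_ne] <;> rintro rfl <;> simp at hx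
  · rfl

/-- Read in `P`, a path of `P.swap p q` continues from `q` whenever it reaches `p`, and from `p`
whenever it reaches `q`; only the first such jump and the target of the last one are recorded. -/
lemma causal_of_causal_swap {x y : α ⊕ β} (h : (P.swap p q).causal x y) :
    P.causal (Sum.map (Equiv.swap p q) id x) y ∨
      ∃ a ∈ ({p, q} : Set α), P.causal (Sum.map (Equiv.swap p q) id x) (.inl a) ∧
        ∃ b ∈ ({p, q} : Set α), P.causal (.inl b) y := by
  induction h with
  | single h => exact .inl (.single ((flowRel_swap P p q _ _).1 h))
  | @tail z y _ hzy ih =>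
    have hzy := (flowRel_swap P p q _ _).1 hzy
    by_cases hz : ∃ a ∈ ({p, q} : Set α), z = .inl a
    · obtain ⟨a, ha, rfl⟩ := hz
      have hjump :
          ∃ c ∈ ({p, q} : Set α), P.causal (Sum.map (Equiv.swap p q) id x) (.inl c) := by
        rcases ih with h | ⟨c, hc, h, -⟩
        exacts [⟨a, ha, h⟩, ⟨c, hc, h⟩]
      obtain ⟨c, hc, hxc⟩ := hjump
      exact .inr ⟨c, hc, hxc, _, swap_apply_mem_pair ha, .single hzy⟩
    · rw [sum_map_swap_eq_self hz] at hzy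
      rcases ih with h | ⟨c, hc, h, b, hb, h'⟩
      exacts [.inl (h.tail hzy), .inr ⟨c, hc, h, b, hb, h'.tail hzy⟩]

end SwapCausal


section SwapAcyclic

variable {P : RawProc S T α β} {p q : α}

lemma not_causal_of_mem_pair (hP : P.IsAcyclic) (hpq : ¬ P.causal (.inl p) (.inl q))
    (hqp : ¬ P.causal (.inl q) (.inl p)) {a b : α} (ha : a ∈ ({p, q} : Set α))
    (hb : b ∈ ({p, q} : Set α)) : ¬ P.causal (.inl a) (.inl b) := by
  rcases ha with rfl | rfl <;> rcases hb with rfl | rfl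
  exacts [hP _, hpq, hqp, hP _]

variable (hP : P.IsAcyclic) (hpq : ¬ P.causal (.inl p) (.inl q))
  (hqp : ¬ P.causal (.inl q) (.inl p))
include hP hpq hqp

lemma not_causal_swap {a b : α} (ha : a ∈ ({p, q} : Set α)) (hb : b ∈ ({p, q} : Set α)) :
    ¬ (P.swap p q).causal (.inl a) (.inl b) := by
  intro h
  rcases causal_of_causal_swap h with h | ⟨c, hc, h, -⟩
  · exact not_causal_of_mem_pair hP hpq hqp (swap_apply_mem_pair ha) hb h
  · exact not_causal_of_mem_pair hP hpq hqp (swap_apply_mem_pair ha) hc h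

lemma isAcyclic_swap : (P.swap p q).IsAcyclic := by
  intro x hx
  by_cases hxpq : ∃ a ∈ ({p, q} : Set α), x = .inl a
  · obtain ⟨a, ha, rfl⟩ := hxpq
    exact not_causal_swap hP hpq hqp ha ha hx
  · have hfix := sum_map_swap_eq_self (p := p) (q := q) hxpq
    rcases causal_of_causal_swap hx with h | ⟨c, hc, h, b, hb, h'⟩
    · rw [hfix] at h
      exact hP x h
    · rw [hfix] at h
      exact not_causal_of_mem_pair hP hpq hqp hb hc (h'.trans h)

end SwapAcyclic


section Embeddings

structure Embedding (fS : α → α) (fT : β → β) (X G : RawProc S T α β) : Prop where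
  injOn_places : InjOn fS X.places
  injOn_transitions : InjOn fT X.transitions
  mapsTo_places : MapsTo fS X.places G.places
  mapsTo_transitions : MapsTo fT X.transitions G.transitions
  flowPT_apply : ∀ x ∈ X.places, ∀ t ∈ X.transitions, G.flowPT (fS x) (fT t) = X.flowPT x t
  flowTP_apply : ∀ x ∈ X.places, ∀ t ∈ X.transitions, G.flowTP (fT t) (fS x) = X.flowTP t x
  initMark_apply : ∀ x ∈ X.places, G.initMark (fS x) = X.initMark x
  projS_apply : ∀ x ∈ X.places, G.projS (fS x) = X.projS x
  projT_apply : ∀ t ∈ X.transitions, G.projT (fT t) = X.projT t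

structure IsoVia (fS : α → α) (fT : β → β) (X G : RawProc S T α β) : Prop
    extends Embedding fS fT X G where
  surjOn_places : SurjOn fS X.places G.places
  surjOn_transitions : SurjOn fT X.transitions G.transitions

structure PrefixEmbedding (fS : α → α) (fT : β → β) (X G : RawProc S T α β) : Prop
    extends Embedding fS fT X G where
  mem_image_of_flowPT :
    ∀ t ∈ X.transitions, ∀ y, G.flowPT y (fT t) ≠ 0 → y ∈ fS '' X.places
  mem_image_of_flowTP :
    ∀ x ∈ X.places, ∀ u, G.flowTP u (fS x) ≠ 0 → u ∈ fT '' X.transitions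

variable {fS gS : α → α} {fT gT : β → β} {X Y G : RawProc S T α β}

lemma iso_iff : Iso X G ↔ ∃ fS fT, IsoVia fS fT X G := by
  constructor
  · rintro ⟨fS, fT, hS, hT, hflow, hinit, hpS, hpT⟩
    exact ⟨fS, fT, ⟨⟨hS.injOn, hT.injOn, hS.mapsTo, hT.mapsTo, fun x hx t ht =>
      (hflow x hx t ht).1, fun x hx t ht => (hflow x hx t ht).2, hinit, hpS, hpT⟩,
      hS.surjOn, hT.surjOn⟩⟩
  · rintro ⟨fS, fT, h⟩
    exact ⟨fS, fT, ⟨h.mapsTo_places, h.injOn_places, h.surjOn_places⟩,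
      ⟨h.mapsTo_transitions, h.injOn_transitions, h.surjOn_transitions⟩,
      fun x hx t ht => ⟨h.flowPT_apply x hx t ht, h.flowTP_apply x hx t ht⟩,
      h.initMark_apply, h.projS_apply, h.projT_apply⟩

lemma Embedding.comp (hg : Embedding gS gT Y G) (hf : Embedding fS fT X Y) :
    Embedding (gS ∘ fS) (gT ∘ fT) X G where
  injOn_places := hg.injOn_places.comp hf.injOn_places hf.mapsTo_places
  injOn_transitions := hg.injOn_transitions.comp hf.injOn_transitions hf.mapsTo_transitions
  mapsTo_places := hg.mapsTo_places.comp hf.mapsTo_places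
  mapsTo_transitions := hg.mapsTo_transitions.comp hf.mapsTo_transitions
  flowPT_apply x hx t ht := (hg.flowPT_apply _ (hf.mapsTo_places hx) _
    (hf.mapsTo_transitions ht)).trans (hf.flowPT_apply x hx t ht)
  flowTP_apply x hx t ht := (hg.flowTP_apply _ (hf.mapsTo_places hx) _
    (hf.mapsTo_transitions ht)).trans (hf.flowTP_apply x hx t ht)
  initMark_apply x hx := (hg.initMark_apply _ (hf.mapsTo_places hx)).trans (hf.initMark_apply x hx)
  projS_apply x hx := (hg.projS_apply _ (hf.mapsTo_places hx)).trans (hf.projS_apply x hx)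
  projT_apply t ht := (hg.projT_apply _ (hf.mapsTo_transitions ht)).trans (hf.projT_apply t ht)

lemma IsoVia.comp (hg : IsoVia gS gT Y G) (hf : IsoVia fS fT X Y) :
    IsoVia (gS ∘ fS) (gT ∘ fT) X G :=
  ⟨hg.toEmbedding.comp hf.toEmbedding, hg.surjOn_places.comp hf.surjOn_places,
    hg.surjOn_transitions.comp hf.surjOn_transitions⟩

lemma IsoVia.bijOn_places (h : IsoVia fS fT X G) : BijOn fS X.places G.places :=
  ⟨h.mapsTo_places, h.injOn_places, h.surjOn_places⟩

lemma IsoVia.bijOn_transitions (h : IsoVia fS fT X G) : BijOn fT X.transitions G.transitions :=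
  ⟨h.mapsTo_transitions, h.injOn_transitions, h.surjOn_transitions⟩

lemma IsoVia.symm (h : IsoVia fS fT X G) : ∃ gS gT, IsoVia gS gT G X := by
  obtain ⟨gS, hgS⟩ := h.bijOn_places.exists_invOn
  obtain ⟨gT, hgT⟩ := h.bijOn_transitions.exists_invOn
  have hS := h.bijOn_places.symm hgS.symm
  have hT := h.bijOn_transitions.symm hgT.symm
  have hfg : ∀ y ∈ G.places, fS (gS y) = y := fun y hy => hgS.2 hy
  have hfgT : ∀ u ∈ G.transitions, fT (gT u) = u := fun u hu => hgT.2 hu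
  refine ⟨gS, gT, ⟨⟨hS.injOn, hT.injOn, hS.mapsTo, hT.mapsTo, ?_, ?_, ?_, ?_, ?_⟩,
    hS.surjOn, hT.surjOn⟩⟩
  · intro y hy u hu
    rw [← h.flowPT_apply _ (hS.mapsTo hy) _ (hT.mapsTo hu), hfg y hy, hfgT u hu]
  · intro y hy u hu
    rw [← h.flowTP_apply _ (hS.mapsTo hy) _ (hT.mapsTo hu), hfg y hy, hfgT u hu]
  · intro y hy
    rw [← h.initMark_apply _ (hS.mapsTo hy), hfg y hy]
  · intro y hy
    rw [← h.projS_apply _ (hS.mapsTo hy), hfg y hy]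
  · intro u hu
    rw [← h.projT_apply _ (hT.mapsTo hu), hfgT u hu]

lemma IsoVia.bijOn_fiber (h : IsoVia fS fT X G) (s : S) :
    BijOn fS (X.places ∩ {x | X.projS x = s}) (G.places ∩ {y | G.projS y = s}) := by
  rw [h.bijOn_places.inter_setOf_eq_image (q := fun x => X.projS x = s)
    fun x hx => by rw [h.projS_apply x hx]]
  exact (h.injOn_places.mono inter_subset_left).bijOn_image

lemma iso_refl (X : RawProc S T α β) : Iso X X :=
  iso_iff.2 ⟨id, id, ⟨⟨injOn_id _, injOn_id _, mapsTo_id _, mapsTo_id _,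
    fun _ _ _ _ => rfl, fun _ _ _ _ => rfl, fun _ _ => rfl, fun _ _ => rfl, fun _ _ => rfl⟩,
    surjOn_id _, surjOn_id _⟩⟩

lemma Iso.trans (hXY : Iso X Y) (hYG : Iso Y G) : Iso X G := by
  obtain ⟨fS, fT, hf⟩ := iso_iff.1 hXY
  obtain ⟨gS, gT, hg⟩ := iso_iff.1 hYG
  exact iso_iff.2 ⟨_, _, hg.comp hf⟩

lemma Iso.symm (h : Iso X G) : Iso G X := by
  obtain ⟨fS, fT, hf⟩ := iso_iff.1 h
  exact iso_iff.2 hf.symm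

lemma Embedding.swap (h : Embedding fS fT X G) {a b : α} (ha : a ∈ X.places)
    (hb : b ∈ X.places) : Embedding fS fT (X.swap a b) (G.swap (fS a) (fS b)) :=
  { h with
    flowPT_apply := fun x hx t ht => by
      rw [swap_flowPT, swap_flowPT, h.injOn_places.swap_apply ha hb hx,
        h.flowPT_apply _ ((Equiv.bijOn_swap ha hb).mapsTo hx) t ht] }

lemma IsoVia.swap (h : IsoVia fS fT X G) {a b : α} (ha : a ∈ X.places) (hb : b ∈ X.places) :
    IsoVia fS fT (X.swap a b) (G.swap (fS a) (fS b)) :=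
  { h with toEmbedding := h.toEmbedding.swap ha hb }

lemma PrefixEmbedding.swap (h : PrefixEmbedding fS fT X G) {a b : α} (ha : a ∈ X.places)
    (hb : b ∈ X.places) : PrefixEmbedding fS fT (X.swap a b) (G.swap (fS a) (fS b)) where
  toEmbedding := h.toEmbedding.swap ha hb
  mem_image_of_flowPT t ht y hy := by
    have hmaps := (Equiv.bijOn_swap (mem_image_of_mem fS ha) (mem_image_of_mem fS hb)).mapsTo
    have := hmaps (h.mem_image_of_flowPT t ht _ (by rwa [swap_flowPT] at hy))
    rwa [Equiv.swap_apply_self] at this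
  mem_image_of_flowTP := h.mem_image_of_flowTP

lemma PrefixEmbedding.comp_isoVia (hg : PrefixEmbedding gS gT Y G) (hf : IsoVia fS fT X Y) :
    PrefixEmbedding (gS ∘ fS) (gT ∘ fT) X G where
  toEmbedding := hg.toEmbedding.comp hf.toEmbedding
  mem_image_of_flowPT t ht y hy := by
    rw [image_comp, hf.bijOn_places.image_eq]
    exact hg.mem_image_of_flowPT _ (hf.mapsTo_transitions ht) y hy
  mem_image_of_flowTP x hx u hu := by
    rw [image_comp, hf.bijOn_transitions.image_eq]
    exact hg.mem_image_of_flowTP _ (hf.mapsTo_places hx) u hu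

lemma IsoVia.toPrefixEmbedding (h : IsoVia fS fT X G) (hG : G.FlowSupported) :
    PrefixEmbedding fS fT X G where
  toEmbedding := h.toEmbedding
  mem_image_of_flowPT _ _ y hy := h.bijOn_places.image_eq ▸ (hG.1 y _ hy).1
  mem_image_of_flowTP _ _ u hu := h.bijOn_transitions.image_eq ▸ (hG.2 u _ hu).2

lemma Embedding.eq_of_sumMap_eq (h : Embedding fS fT X G) {v w : α ⊕ β} (hv : X.IsNode v)
    (hw : X.IsNode w) (hvw : Sum.map fS fT v = Sum.map fS fT w) : v = w := by
  rcases v with x | t <;> rcases w with y | u <;> simp only [Sum.map_inl, Sum.map_inr,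
    reduceCtorEq, Sum.inl.injEq, Sum.inr.injEq] at hvw ⊢
  · exact h.injOn_places hv hw hvw
  · exact h.injOn_transitions hv hw hvw

lemma PrefixEmbedding.exists_flowRel_of_flowRel_map (h : PrefixEmbedding fS fT X G)
    {u : α ⊕ β} {w : α ⊕ β} (hw : X.IsNode w) (huw : G.flowRel u (Sum.map fS fT w)) :
    ∃ v, u = Sum.map fS fT v ∧ X.IsNode v ∧ X.flowRel v w := by
  rcases w with y | t <;> rcases u with x | u
  · exact huw.elim
  · obtain ⟨t, ht, rfl⟩ := h.mem_image_of_flowTP y hw u huw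
    refine ⟨.inr t, rfl, ht, ?_⟩
    simpa [flowRel, h.flowTP_apply y hw t ht] using huw
  · obtain ⟨x, hx, rfl⟩ := h.mem_image_of_flowPT t hw x huw
    refine ⟨.inl x, rfl, hx, ?_⟩
    simpa [flowRel, h.flowPT_apply x hx t hw] using huw
  · exact huw.elim

lemma PrefixEmbedding.exists_causal_of_causal_map (h : PrefixEmbedding fS fT X G)
    {u w : α ⊕ β} (hw : X.IsNode w) (huw : G.causal u (Sum.map fS fT w)) :
    ∃ v, u = Sum.map fS fT v ∧ X.IsNode v ∧ X.causal v w := by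
  induction huw using Relation.TransGen.head_induction_on with
  | single huw =>
    obtain ⟨v, rfl, hv, hvw⟩ := h.exists_flowRel_of_flowRel_map hw huw
    exact ⟨v, rfl, hv, .single hvw⟩
  | head huz _ ih =>
    obtain ⟨z, rfl, hz, hzw⟩ := ih
    obtain ⟨v, rfl, hv, hvz⟩ := h.exists_flowRel_of_flowRel_map hz huz
    exact ⟨v, rfl, hv, .head hvz hzw⟩

lemma PrefixEmbedding.causal_of_causal_map (h : PrefixEmbedding fS fT X G) {v w : α ⊕ β}
    (hv : X.IsNode v) (hw : X.IsNode w) (hvw : G.causal (Sum.map fS fT v) (Sum.map fS fT w)) :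
    X.causal v w := by
  obtain ⟨v', hv'v, hv', hv'w⟩ := h.exists_causal_of_causal_map hw hvw
  rwa [h.eq_of_sumMap_eq hv hv' hv'v]

lemma IsoVia.exists_eq_map (h : IsoVia fS fT X G) {w : α ⊕ β} (hw : G.IsNode w) :
    ∃ v, X.IsNode v ∧ w = Sum.map fS fT v := by
  rcases w with y | u
  · obtain ⟨x, hx, rfl⟩ := h.surjOn_places hw
    exact ⟨.inl x, hx, rfl⟩
  · obtain ⟨t, ht, rfl⟩ := h.surjOn_transitions hw
    exact ⟨.inr t, ht, rfl⟩

lemma IsoVia.isAcyclic (h : IsoVia fS fT X G) (hG : G.FlowSupported) (hX : X.IsAcyclic) :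
    G.IsAcyclic := by
  intro w hw
  have hwG : G.IsNode w := by
    obtain ⟨z, hzw⟩ := Relation.TransGen.tail'_iff.1 hw
    exact hG.isNode_of_flowRel hzw.2
  obtain ⟨v, hv, rfl⟩ := h.exists_eq_map hwG
  exact hX v ((h.toPrefixEmbedding hG).causal_of_causal_map hv hv hw)

lemma Embedding.normalize (h : Embedding fS fT X G) : Embedding fS fT X.normalize G.normalize :=
  { h with
    flowPT_apply := fun x hx t ht => by
      rw [normalize_flowPT_of_mem (h.mapsTo_places hx) (h.mapsTo_transitions ht),
        normalize_flowPT_of_mem (P := X) hx ht, h.flowPT_apply x hx t ht]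
    flowTP_apply := fun x hx t ht => by
      rw [normalize_flowTP_of_mem (h.mapsTo_places hx) (h.mapsTo_transitions ht),
        normalize_flowTP_of_mem (P := X) hx ht, h.flowTP_apply x hx t ht] }

lemma IsoVia.normalize (h : IsoVia fS fT X G) : IsoVia fS fT X.normalize G.normalize :=
  { h with toEmbedding := h.toEmbedding.normalize }

lemma isoVia_normalize (X : RawProc S T α β) : IsoVia id id X X.normalize :=
  ⟨⟨injOn_id _, injOn_id _, mapsTo_id _, mapsTo_id _,
    fun _ hx _ ht => normalize_flowPT_of_mem hx ht, fun _ hx _ ht => normalize_flowTP_of_mem hx ht,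
    fun _ _ => rfl, fun _ _ => rfl, fun _ _ => rfl⟩, surjOn_id _, surjOn_id _⟩

end Embeddings

section SwapSteps

variable {U V : RawProc S T α β}

lemma SwapStep.isAcyclic (h : SwapStep U V) (hU : U.IsAcyclic) (hV : V.FlowSupported) :
    V.IsAcyclic := by
  obtain ⟨p, q, -, -, -, hpq, hqp, hiso⟩ := h
  obtain ⟨fS, fT, hf⟩ := iso_iff.1 hiso
  exact hf.isAcyclic hV (isAcyclic_swap hU hpq hqp)

lemma SwapStep.symm (h : SwapStep U V) (hU : U.IsAcyclic) (hV : V.FlowSupported) :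
    SwapStep V U := by
  obtain ⟨p, q, hp, hq, hproj, hpq, hqp, hiso⟩ := h
  obtain ⟨fS, fT, hf⟩ := iso_iff.1 hiso
  have hmem : ∀ a ∈ ({p, q} : Set α), a ∈ U.places := by rintro a (rfl | rfl) <;> assumption
  have hindep {a b : α} (ha : a ∈ ({p, q} : Set α)) (hb : b ∈ ({p, q} : Set α)) :
      ¬ V.causal (.inl (fS a)) (.inl (fS b)) := fun hab =>
    not_causal_swap hU hpq hqp ha hb
      ((hf.toPrefixEmbedding hV).causal_of_causal_map (hmem a ha) (hmem b hb) hab)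
  have hback := hf.swap (a := p) (b := q) hp hq
  rw [swap_swap] at hback
  refine ⟨fS p, fS q, hf.mapsTo_places hp, hf.mapsTo_places hq, ?_, hindep (by simp) (by simp),
    hindep (by simp) (by simp), Iso.symm (iso_iff.2 ⟨_, _, hback⟩)⟩
  rw [hf.projS_apply p hp, hf.projS_apply q hq]
  exact hproj

lemma SwapStep.normalize (h : SwapStep U V) : SwapStep U.normalize V.normalize := by
  obtain ⟨p, q, hp, hq, hproj, hpq, hqp, hiso⟩ := h
  obtain ⟨fS, fT, hf⟩ := iso_iff.1 hiso
  refine ⟨p, q, hp, hq, hproj, fun h => hpq (causal_of_causal_restrict h),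
    fun h => hqp (causal_of_causal_restrict h), ?_⟩
  rw [← normalize_swap hp hq]
  exact iso_iff.2 ⟨fS, fT, hf.normalize⟩

lemma SwapEquiv.normalize (h : SwapEquiv U V) : SwapEquiv U.normalize V.normalize :=
  Relation.ReflTransGen.lift RawProc.normalize (fun _ _ => SwapStep.normalize) _ _ h

lemma SwapEquiv.symm (h : SwapEquiv U V) (hU : U.FlowSupported) (hUa : U.IsAcyclic)
    (hV : V.FlowSupported) : SwapEquiv V U := by
  -- Inner members of the chain may have arcs outside their nodes, creating spurious causality;
  -- so the chain is normalized before it is reversed.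
  suffices ∀ W, SwapEquiv U W → W.normalize.IsAcyclic ∧ SwapEquiv W.normalize U by
    simpa only [normalize_eq_self hV] using (this V h).2
  intro W hW
  induction hW with
  | refl =>
    rw [normalize_eq_self hU]
    exact ⟨hUa, .refl⟩
  | tail _ hstep ih =>
    have hstep := hstep.normalize
    exact ⟨hstep.isAcyclic ih.1 flowSupported_restrict,
      .head (hstep.symm ih.1 flowSupported_restrict) ih.2⟩

/-- The isomorphism is absorbed into the last swap step, or into the trivial swap at a place
of `A`. -/
lemma SwapEquiv.trans_iso {A P P' : RawProc S T α β} (h : SwapEquiv A P) (hiso : Iso P P')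
    (hA : A.places.Nonempty) (hAa : A.IsAcyclic) : SwapEquiv A P' := by
  rcases h.cases_tail with rfl | ⟨B, hAB, p, q, hp, hq, hproj, hpq, hqp, hB⟩
  · obtain ⟨p, hp⟩ := hA
    exact .single ⟨p, p, hp, hp, rfl, hAa _, hAa _, by rwa [swap_self]⟩
  · exact hAB.tail ⟨p, q, hp, hq, hproj, hpq, hqp, hB.trans hiso⟩

end SwapSteps

end RawProc

/-- The axioms of `IsProcessOf` that only look at arcs between nodes of `U`: unlike the others,
they are preserved by swapping and by isomorphism. -/
structure IsProcessOn {S T α β : Type*} (N : Net S T) (U : RawProc S T α β) : Prop where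
  subsingleton_producers :
    ∀ x ∈ U.places, (U.transitions ∩ {t | U.flowTP t x ≠ 0}).Subsingleton
  initMark_eq_one :
    ∀ x ∈ U.places, (∀ t ∈ U.transitions, U.flowTP t x = 0) → U.initMark x = 1
  initMark_eq_zero :
    ∀ x ∈ U.places, ∀ t ∈ U.transitions, U.flowTP t x ≠ 0 → U.initMark x = 0
  finite_preset : ∀ t ∈ U.transitions, (U.places ∩ {x | U.flowPT x t ≠ 0}).Finite
  finite_postset : ∀ t ∈ U.transitions, (U.places ∩ {x | U.flowTP t x ≠ 0}).Finite
  finsum_flowPT : ∀ t ∈ U.transitions, ∀ s,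
    ∑ᶠ x ∈ U.places ∩ {x | U.projS x = s}, U.flowPT x t = N.pre (U.projT t) s
  finsum_flowTP : ∀ t ∈ U.transitions, ∀ s,
    ∑ᶠ x ∈ U.places ∩ {x | U.projS x = s}, U.flowTP t x = N.post (U.projT t) s

namespace IsProcessOn

open RawProc

variable {S T α β : Type*} {N : Net S T} {U V : RawProc S T α β}

lemma of_isoVia {fS : α → α} {fT : β → β} (hU : IsProcessOn N U) (h : IsoVia fS fT U V) :
    IsProcessOn N V := by
  have hS := h.bijOn_places
  have hT := h.bijOn_transitions
  constructor
  · intro y hy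
    obtain ⟨x, hx, rfl⟩ := hS.surjOn hy
    rw [hT.inter_setOf_eq_image (q := fun t => U.flowTP t x ≠ 0)
      fun t ht => by rw [h.flowTP_apply x hx t ht]]
    exact (hU.subsingleton_producers x hx).image _
  · intro y hy hy0
    obtain ⟨x, hx, rfl⟩ := hS.surjOn hy
    rw [h.initMark_apply x hx]
    exact hU.initMark_eq_one x hx fun t ht =>
      h.flowTP_apply x hx t ht ▸ hy0 _ (h.mapsTo_transitions ht)
  · intro y hy u hu hyu
    obtain ⟨x, hx, rfl⟩ := hS.surjOn hy
    obtain ⟨t, ht, rfl⟩ := hT.surjOn hu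
    rw [h.initMark_apply x hx]
    exact hU.initMark_eq_zero x hx t ht (h.flowTP_apply x hx t ht ▸ hyu)
  · intro u hu
    obtain ⟨t, ht, rfl⟩ := hT.surjOn hu
    rw [hS.inter_setOf_eq_image (q := fun x => U.flowPT x t ≠ 0)
      fun x hx => by rw [h.flowPT_apply x hx t ht]]
    exact (hU.finite_preset t ht).image _
  · intro u hu
    obtain ⟨t, ht, rfl⟩ := hT.surjOn hu
    rw [hS.inter_setOf_eq_image (q := fun x => U.flowTP t x ≠ 0)
      fun x hx => by rw [h.flowTP_apply x hx t ht]]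
    exact (hU.finite_postset t ht).image _
  · intro u hu s
    obtain ⟨t, ht, rfl⟩ := hT.surjOn hu
    rw [h.projT_apply t ht, ← hU.finsum_flowPT t ht s]
    exact (finsum_mem_eq_of_bijOn fS (h.bijOn_fiber s) fun x hx =>
      (h.flowPT_apply x hx.1 t ht).symm).symm
  · intro u hu s
    obtain ⟨t, ht, rfl⟩ := hT.surjOn hu
    rw [h.projT_apply t ht, ← hU.finsum_flowTP t ht s]
    exact (finsum_mem_eq_of_bijOn fS (h.bijOn_fiber s) fun x hx =>
      (h.flowTP_apply x hx.1 t ht).symm).symm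

lemma swap (hU : IsProcessOn N U) {p q : α} (hp : p ∈ U.places) (hq : q ∈ U.places)
    (hproj : U.projS p = U.projS q) : IsProcessOn N (U.swap p q) where
  subsingleton_producers := hU.subsingleton_producers
  initMark_eq_one := hU.initMark_eq_one
  initMark_eq_zero := hU.initMark_eq_zero
  finite_preset t ht := by
    have h := (Equiv.bijOn_swap hp hq).inter_setOf_eq_image
      (p := fun y => U.flowPT (Equiv.swap p q y) t ≠ 0) (q := fun x => U.flowPT x t ≠ 0)
      fun x _ => by rw [Equiv.swap_apply_self]
    simp only [swap_places, swap_flowPT]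
    rw [h]
    exact (hU.finite_preset t ht).image _
  finite_postset := hU.finite_postset
  finsum_flowPT t ht s := by
    have hfiber : BijOn (Equiv.swap p q) (U.places ∩ {x | U.projS x = s})
        (U.places ∩ {x | U.projS x = s}) := by
      refine Equiv.bijOn _ fun x => ?_
      have hx : U.projS (Equiv.swap p q x) = U.projS x := by
        rcases eq_or_ne x p with rfl | hxp
        · simp [hproj]
        rcases eq_or_ne x q with rfl | hxq
        · simp [hproj]
        rw [Equiv.swap_apply_of_ne_of_ne hxp hxq]
      simp only [mem_inter_iff, mem_ofPred_eq, Equiv.swap_apply_mem_iff hp hq, hx]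
    simp only [swap_places, swap_flowPT, swap_projS, swap_projT]
    rw [← hU.finsum_flowPT t ht s]
    exact finsum_mem_eq_of_bijOn _ hfiber fun _ _ => rfl
  finsum_flowTP := hU.finsum_flowTP

lemma of_swapStep (hU : IsProcessOn N U) (h : SwapStep U V) : IsProcessOn N V := by
  obtain ⟨p, q, hp, hq, hproj, -, -, hiso⟩ := h
  obtain ⟨fS, fT, hf⟩ := iso_iff.1 hiso
  exact (hU.swap hp hq hproj).of_isoVia hf

lemma of_swapStep_rev (hV : IsProcessOn N V) (h : SwapStep U V) : IsProcessOn N U := by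
  obtain ⟨p, q, hp, hq, hproj, -, -, hiso⟩ := h
  obtain ⟨fS, fT, hf⟩ := iso_iff.1 (Iso.symm hiso)
  simpa using (hV.of_isoVia hf).swap hp hq hproj

lemma of_swapEquiv (hU : IsProcessOn N U) (h : SwapEquiv U V) : IsProcessOn N V := by
  induction h with
  | refl => exact hU
  | tail _ hstep ih => exact ih.of_swapStep hstep

lemma of_swapEquiv_rev (hV : IsProcessOn N V) (h : SwapEquiv U V) : IsProcessOn N U := by
  induction h using Relation.ReflTransGen.head_induction_on with
  | refl => exact hV
  | head hstep _ ih => exact ih.of_swapStep_rev hstep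

lemma normalize (hU : IsProcessOn N U) : IsProcessOn N U.normalize :=
  hU.of_isoVia (isoVia_normalize U)

end IsProcessOn

lemma IsProcessOf.flowSupported {S T α β : Type*} {N : Net S T} {P : RawProc S T α β}
    (hP : IsProcessOf N P) : P.FlowSupported :=
  ⟨hP.flowPT_dom, hP.flowTP_dom⟩

lemma IsProcessOf.isAcyclic {S T α β : Type*} {N : Net S T} {P : RawProc S T α β}
    (hP : IsProcessOf N P) : P.IsAcyclic :=
  hP.acyclic

lemma IsProcessOf.isProcessOn {S T α β : Type*} {N : Net S T} {P : RawProc S T α β}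
    (hP : IsProcessOf N P) : IsProcessOn N P := by
  have hfiber {f : α → ℕ} (hf : ∀ x, f x ≠ 0 → x ∈ P.places) (s : S) :
      ∑ᶠ x ∈ P.places ∩ {x | P.projS x = s}, f x = ∑ᶠ x ∈ {x | P.projS x = s}, f x :=
    finsum_mem_inter_support_eq' f _ _ fun x hx => ⟨fun h => h.2, fun h => ⟨hf x hx, h⟩⟩
  refine ⟨fun x hx => (hP.pre_place x hx).1.anti inter_subset_right, fun x hx hx0 => ?_,
    fun x hx t _ hxt => hP.init_zero x hx ⟨t, hxt⟩,
    fun t ht => (hP.t_pre_fin t ht).subset inter_subset_right,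
    fun t ht => (hP.t_post_fin t ht).subset inter_subset_right,
    fun t ht s => ?_, fun t ht s => ?_⟩
  · exact hP.init_one x hx fun t => by_contra fun h => h (hx0 t (hP.flowTP_dom t x h).2)
  · rw [hfiber (fun x h => (hP.flowPT_dom x t h).1), hP.proj_pre t ht s]
  · rw [hfiber (fun x h => (hP.flowTP_dom t x h).1), hP.proj_post t ht s]

namespace RawProc

variable {S T α β : Type*} {N : Net S T} {X Y G : RawProc S T α β}

section Prefix

variable (h : IsPrefix X Y) (hX : IsProcessOn N X) (hY : IsProcessOn N Y)
include h hX hY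

/-- `X` and `Y` both count the arcs of `t` place by place of the net, so `Y` has no arc at `t`
that `X` lacks. -/
lemma IsPrefix.flowPT_eq_zero {t : β} (ht : t ∈ X.transitions) {y : α} (hy : y ∈ Y.places)
    (hyX : y ∉ X.places) : Y.flowPT y t = 0 := by
  obtain ⟨hpl, htr, -, hflow, hpS, hpT⟩ := h
  refine eq_zero_of_finsum_mem_eq_of_subset (s := X.places ∩ {x | X.projS x = Y.projS y})
    (t := Y.places ∩ {x | Y.projS x = Y.projS y})
    (fun x hx => ⟨hpl hx.1, (hpS x hx.1).symm.trans hx.2⟩)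
    ((hY.finite_preset t (htr ht)).subset (inter_subset_inter_left _ inter_subset_left)) ?_
    ⟨hy, rfl⟩ fun hyX' => hyX hyX'.1
  rw [hY.finsum_flowPT t (htr ht), ← hpT t ht, ← hX.finsum_flowPT t ht]
  exact finsum_mem_congr rfl fun x hx => (hflow x hx.1 t ht).1.symm

lemma IsPrefix.flowTP_eq_zero {t : β} (ht : t ∈ X.transitions) {y : α} (hy : y ∈ Y.places)
    (hyX : y ∉ X.places) : Y.flowTP t y = 0 := by
  obtain ⟨hpl, htr, -, hflow, hpS, hpT⟩ := h
  refine eq_zero_of_finsum_mem_eq_of_subset (s := X.places ∩ {x | X.projS x = Y.projS y})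
    (t := Y.places ∩ {x | Y.projS x = Y.projS y})
    (fun x hx => ⟨hpl hx.1, (hpS x hx.1).symm.trans hx.2⟩)
    ((hY.finite_postset t (htr ht)).subset (inter_subset_inter_left _ inter_subset_left)) ?_
    ⟨hy, rfl⟩ fun hyX' => hyX hyX'.1
  rw [hY.finsum_flowTP t (htr ht), ← hpT t ht, ← hX.finsum_flowTP t ht]
  exact finsum_mem_congr rfl fun x hx => (hflow x hx.1 t ht).2.symm

lemma IsPrefix.mem_transitions_of_flowTP {x : α} (hx : x ∈ X.places) {u : β}
    (hu : u ∈ Y.transitions) (hxu : Y.flowTP u x ≠ 0) : u ∈ X.transitions := by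
  obtain ⟨hpl, htr, hinit, hflow, -, -⟩ := h
  have hx0 : X.initMark x = 0 := hinit ▸ hY.initMark_eq_zero x (hpl hx) u hu hxu
  obtain ⟨t, ht, hxt⟩ : ∃ t ∈ X.transitions, X.flowTP t x ≠ 0 := by
    by_contra! hno
    have := hX.initMark_eq_one x hx hno
    omega
  have hYxt : Y.flowTP t x ≠ 0 := by rwa [← (hflow x hx t ht).2]
  obtain rfl := hY.subsingleton_producers x (hpl hx) ⟨htr ht, hYxt⟩ ⟨hu, hxu⟩
  exact ht

lemma IsPrefix.prefixEmbedding (hYs : Y.FlowSupported) : PrefixEmbedding id id X Y := by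
  obtain ⟨hpl, htr, hinit, hflow, hpS, hpT⟩ := id h
  refine ⟨⟨injOn_id _, injOn_id _, hpl, htr, fun x hx t ht => (hflow x hx t ht).1.symm,
    fun x hx t ht => (hflow x hx t ht).2.symm, fun x _ => congrFun hinit.symm x,
    fun x hx => (hpS x hx).symm, fun t ht => (hpT t ht).symm⟩, fun t ht y hy => ?_,
    fun x hx u hu => ?_⟩
  · rw [image_id]
    by_contra hyX
    exact hy (h.flowPT_eq_zero hX hY ht (hYs.1 y _ hy).1 hyX)
  · rw [image_id]
    exact h.mem_transitions_of_flowTP hX hY hx (hYs.2 u _ hu).2 hu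

end Prefix

lemma isPrefix_refl (X : RawProc S T α β) : IsPrefix X X :=
  ⟨subset_rfl, subset_rfl, rfl, fun _ _ _ _ => ⟨rfl, rfl⟩, fun _ _ => rfl, fun _ _ => rfl⟩

lemma IsPrefix.normalize (h : IsPrefix X Y) : IsPrefix X.normalize Y.normalize := by
  obtain ⟨hpl, htr, hinit, hflow, hpS, hpT⟩ := h
  refine ⟨hpl, htr, hinit, fun x hx t ht => ?_, hpS, hpT⟩
  rw [normalize_flowPT_of_mem (P := X) hx ht, normalize_flowTP_of_mem (P := X) hx ht,
    normalize_flowPT_of_mem (P := Y) (hpl hx) (htr ht),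
    normalize_flowTP_of_mem (P := Y) (hpl hx) (htr ht)]
  exact hflow x hx t ht

lemma isPrefix_restrict_of_isPrefix {pl : Set α} {tr : Set β} (h : IsPrefix X Y)
    (hpl : X.places ⊆ pl) (htr : X.transitions ⊆ tr) : IsPrefix X (Y.restrict pl tr) := by
  obtain ⟨-, -, hinit, hflow, hpS, hpT⟩ := h
  refine ⟨hpl, htr, hinit, fun x hx t ht => ?_, hpS, hpT⟩
  rw [restrict_flowPT_of_mem (hpl hx) (htr ht), restrict_flowTP_of_mem (hpl hx) (htr ht)]
  exact hflow x hx t ht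

section Pullback

variable {gS : α → α} {gT : β → β}

lemma PrefixEmbedding.pullback_swapStep {Y₁ G₁ : RawProc S T α β} (hs : SwapStep Y Y₁)
    (e : PrefixEmbedding gS gT Y₁ G₁) :
    ∃ (gS' : α → α) (gT' : β → β) (G₀ : RawProc S T α β),
      PrefixEmbedding gS' gT' Y G₀ ∧ SwapStep G₀ G₁ := by
  obtain ⟨a, b, ha, hb, hproj, hab, hba, hiso⟩ := hs
  obtain ⟨fS, fT, hf⟩ := iso_iff.1 hiso
  have e₀ := (e.comp_isoVia hf).swap (a := a) (b := b) ha hb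
  rw [swap_swap] at e₀
  refine ⟨_, _, _, e₀, _, _, e₀.mapsTo_places ha, e₀.mapsTo_places hb, ?_,
    fun h => hab (e₀.causal_of_causal_map ha hb h),
    fun h => hba (e₀.causal_of_causal_map hb ha h),
    by rw [swap_swap]; exact iso_refl G₁⟩
  rw [e₀.projS_apply a ha, e₀.projS_apply b hb, hproj]

lemma PrefixEmbedding.pullback {Z : RawProc S T α β} (h : SwapEquiv Y Z)
    (e : PrefixEmbedding gS gT Z G) :
    ∃ (gS' : α → α) (gT' : β → β) (G' : RawProc S T α β),
      PrefixEmbedding gS' gT' Y G' ∧ SwapEquiv G' G := by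
  induction h using Relation.ReflTransGen.head_induction_on with
  | refl => exact ⟨_, _, _, e, .refl⟩
  | head hstep _ ih =>
    obtain ⟨_, _, _, e₁, hG₁⟩ := ih
    obtain ⟨_, _, _, e₀, hG₀⟩ := e₁.pullback_swapStep hstep
    exact ⟨_, _, _, e₀, .head hG₀ hG₁⟩

lemma Embedding.exists_iso_isPrefix (hXY : IsPrefix X Y) (e : Embedding gS gT Y G) :
    ∃ X', Iso X X' ∧ IsPrefix X' G := by
  obtain ⟨hpl, htr, hinit, hflow, hpS, hpT⟩ := hXY
  refine ⟨G.restrict (gS '' X.places) (gT '' X.transitions), iso_iff.2 ⟨gS, gT,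
    ⟨⟨e.injOn_places.mono hpl, e.injOn_transitions.mono htr, mapsTo_image _ _,
      mapsTo_image _ _, fun x hx t ht => ?_, fun x hx t ht => ?_, fun x hx => ?_,
      fun x hx => ?_, fun t ht => ?_⟩, surjOn_image _ _, surjOn_image _ _⟩⟩,
    isPrefix_restrict (e.mapsTo_places.mono_left hpl).image_subset
      (e.mapsTo_transitions.mono_left htr).image_subset⟩
  · rw [restrict_flowPT_of_mem (mem_image_of_mem _ hx) (mem_image_of_mem _ ht),
      e.flowPT_apply x (hpl hx) t (htr ht), (hflow x hx t ht).1]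
  · rw [restrict_flowTP_of_mem (mem_image_of_mem _ hx) (mem_image_of_mem _ ht),
      e.flowTP_apply x (hpl hx) t (htr ht), (hflow x hx t ht).2]
  · exact (e.initMark_apply x (hpl hx)).trans (congrFun hinit x).symm
  · exact (e.projS_apply x (hpl hx)).trans (hpS x hx).symm
  · exact (e.projT_apply t (htr ht)).trans (hpT t ht).symm

end Pullback

end RawProc

namespace IsProcessOf

open RawProc

variable {S T α β : Type*} {N : Net S T} {P : RawProc S T α β}

lemma isPrefix_of_places_eq_empty {C : RawProc S T α β} (hP : IsProcessOf N P)
    (hC : IsProcessOf N C) (hPe : P.places = ∅) : IsPrefix P C := by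
  have htr : P.transitions = ∅ := eq_empty_of_forall_notMem fun t ht => by
    obtain ⟨x, hx⟩ := hP.t_pre_ne t ht
    simpa [hPe] using (hP.flowPT_dom x t hx).1
  have hinit : ∀ x, P.initMark x = 0 := fun x => hP.initMark_dom x (by simp [hPe])
  have hM0 : ∀ s, N.M0 s = 0 := fun s => by
    rw [← hP.proj_init s]
    exact finsum_mem_of_eqOn_zero fun x _ => hinit x
  have hCinit : ∀ x, C.initMark x = 0 := fun x =>
    eq_zero_of_finsum_mem_eq_of_subset (t := {y | C.projS y = C.projS x}) (empty_subset _)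
      (hC.proj_init_fin (C.projS x))
      (by rw [finsum_mem_empty, hC.proj_init, hM0]) rfl (notMem_empty x)
  refine ⟨by simp [hPe], by simp [htr], funext fun x => (hinit x).trans (hCinit x).symm,
    ?_, ?_, ?_⟩ <;> simp [hPe, htr]

lemma restrict (hP : IsProcessOf N P) {pl : Set α} {tr : Set β} (hpl : pl ⊆ P.places)
    (htr : tr ⊆ P.transitions) (hinit : ∀ x, P.initMark x ≠ 0 → x ∈ pl)
    (hpre : ∀ t ∈ tr, ∀ x, P.flowPT x t ≠ 0 → x ∈ pl)
    (hpost : ∀ t ∈ tr, ∀ x, P.flowTP t x ≠ 0 → x ∈ pl)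
    (hprod : ∀ x ∈ pl, ∀ t, P.flowTP t x ≠ 0 → t ∈ tr) :
    IsProcessOf N (P.restrict pl tr) := by
  have hPT {t : β} (ht : t ∈ tr) (x : α) : (P.restrict pl tr).flowPT x t = P.flowPT x t := by
    by_cases hx : x ∈ pl
    · exact restrict_flowPT_of_mem hx ht
    · rw [not_imp_comm.1 (hpre t ht x) hx]
      exact if_neg fun h => hx h.1
  have hTP {t : β} (ht : t ∈ tr) (x : α) : (P.restrict pl tr).flowTP t x = P.flowTP t x := by
    by_cases hx : x ∈ pl
    · exact restrict_flowTP_of_mem hx ht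
    · rw [not_imp_comm.1 (hpost t ht x) hx]
      exact if_neg fun h => hx h.1
  exact
  { flowPT_dom := flowSupported_restrict.1
    flowTP_dom := flowSupported_restrict.2
    initMark_dom := fun x hx => by_contra fun h => hx (hinit x h)
    pre_place := fun x hx =>
      ⟨(hP.pre_place x (hpl hx)).1.anti fun _ => flowTP_ne_zero_of_restrict,
      fun t => (restrict_flowTP_le t x).trans ((hP.pre_place x (hpl hx)).2 t)⟩
    post_place := fun x hx =>
      ⟨(hP.post_place x (hpl hx)).1.anti fun _ => flowPT_ne_zero_of_restrict,
      fun t => (restrict_flowPT_le x t).trans ((hP.post_place x (hpl hx)).2 t)⟩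
    init_one := fun x hx hx0 => hP.init_one x (hpl hx) fun t => by_contra fun h =>
      h ((hTP (hprod x hx t h) x).symm.trans (hx0 t))
    init_zero := fun x hx ⟨t, hxt⟩ =>
      hP.init_zero x (hpl hx) ⟨t, flowTP_ne_zero_of_restrict hxt⟩
    acyclic := fun x hx => hP.acyclic x (causal_of_causal_restrict hx)
    finite_past := fun t ht => (hP.finite_past t (htr ht)).subset
      fun _ hu => causal_of_causal_restrict hu
    t_pre_fin := fun t ht => (hP.t_pre_fin t (htr ht)).subset fun _ => flowPT_ne_zero_of_restrict
    t_pre_ne := fun t ht => (hP.t_pre_ne t (htr ht)).imp fun x hx => (hPT ht x).symm ▸ hx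
    t_post_fin := fun t ht => (hP.t_post_fin t (htr ht)).subset fun _ => flowTP_ne_zero_of_restrict
    proj_init_fin := hP.proj_init_fin
    proj_init := hP.proj_init
    proj_pre := fun t ht s =>
      (finsum_mem_congr rfl fun x _ => hPT ht x).trans (hP.proj_pre t (htr ht) s)
    proj_post := fun t ht s =>
      (finsum_mem_congr rfl fun x _ => hTP ht x).trans (hP.proj_post t (htr ht) s) }

lemma exists_finite_prefix_above (hP : IsProcessOf N P) (Q₁ Q₂ : FinProcOf N α β)
    (h₁ : IsPrefix Q₁.1 P) (h₂ : IsPrefix Q₂.1 P) :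
    ∃ R : FinProcOf N α β, IsPrefix R.1 P ∧ IsPrefix Q₁.1 R.1 ∧ IsPrefix Q₂.1 R.1 := by
  have hclosed (Q : FinProcOf N α β) (hQ : IsPrefix Q.1 P) :
      (∀ x, P.initMark x ≠ 0 → x ∈ Q.1.places) ∧
      (∀ t ∈ Q.1.transitions, ∀ x, P.flowPT x t ≠ 0 → x ∈ Q.1.places) ∧
      (∀ t ∈ Q.1.transitions, ∀ x, P.flowTP t x ≠ 0 → x ∈ Q.1.places) ∧
      (∀ x ∈ Q.1.places, ∀ t, P.flowTP t x ≠ 0 → t ∈ Q.1.transitions) := by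
    have hQP := Q.2.1.isProcessOn
    have hinit : Q.1.initMark = P.initMark := hQ.2.2.1
    refine ⟨fun x hx => by_contra fun h => hx (hinit ▸ Q.2.1.initMark_dom x h),
      fun t ht x hx => by_contra fun h => hx (hQ.flowPT_eq_zero hQP hP.isProcessOn ht
        (hP.flowPT_dom x t hx).1 h),
      fun t ht x hx => by_contra fun h => hx (hQ.flowTP_eq_zero hQP hP.isProcessOn ht
        (hP.flowTP_dom t x hx).1 h),
      fun x hx t hxt => hQ.mem_transitions_of_flowTP hQP hP.isProcessOn hx
        (hP.flowTP_dom t x hxt).2 hxt⟩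
  obtain ⟨hi₁, hpre₁, hpost₁, hprod₁⟩ := hclosed Q₁ h₁
  obtain ⟨hi₂, hpre₂, hpost₂, hprod₂⟩ := hclosed Q₂ h₂
  have hpl := union_subset h₁.1 h₂.1
  have htr := union_subset h₁.2.1 h₂.2.1
  refine ⟨⟨P.restrict _ _, hP.restrict hpl htr (fun x hx => .inl (hi₁ x hx)) ?_ ?_ ?_,
      Q₁.2.2.union Q₂.2.2⟩, isPrefix_restrict hpl htr,
    isPrefix_restrict_of_isPrefix h₁ subset_union_left subset_union_left,
    isPrefix_restrict_of_isPrefix h₂ subset_union_right subset_union_right⟩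
  · rintro t (ht | ht) x hx
    exacts [.inl (hpre₁ t ht x hx), .inr (hpre₂ t ht x hx)]
  · rintro t (ht | ht) x hx
    exacts [.inl (hpost₁ t ht x hx), .inr (hpost₂ t ht x hx)]
  · rintro x (hx | hx) t hxt
    exacts [.inl (hprod₁ x hx t hxt), .inr (hprod₂ x hx t hxt)]

end IsProcessOf

section Runs

open RawProc

variable {S T α β : Type*} {N : Net S T}

lemma swapEquiv_of_bdClass_eq {P Q : FinProcOf N α β} (h : bdClass N P = bdClass N Q) :
    SwapEquiv P.1 Q.1 := by
  have hequiv : Equivalence fun P Q : FinProcOf N α β => SwapEquiv P.1 Q.1 :=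
    ⟨fun _ => .refl,
      fun {P Q} h => h.symm P.2.1.flowSupported P.2.1.isAcyclic Q.2.1.flowSupported, .trans⟩
  exact hequiv.eqvGen_iff.1 (Quot.eqvGen_exact h)

lemma bdRunLE_of_isPrefix {Q R : FinProcOf N α β} (h : IsPrefix Q.1 R.1) :
    bdRunLE N (bdClass N Q) (bdClass N R) :=
  ⟨Q, R, rfl, rfl, Q.1, R.1, .refl, h, .refl⟩

lemma bdRunLE_trans {x y z : PartialBDRun N α β} (hxy : bdRunLE N x y) (hyz : bdRunLE N y z) :
    bdRunLE N x z := by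
  obtain ⟨A, B, rfl, rfl, P₁, Q₁, hAP₁, hP₁Q₁, hQ₁B⟩ := hxy
  obtain ⟨B', C, hB', rfl, P₂, Q₂, hB'P₂, hP₂Q₂, hQ₂C⟩ := hyz
  rcases A.1.places.eq_empty_or_nonempty with hAe | hAne
  · exact ⟨A, C, rfl, rfl, A.1, C.1, .refl, A.2.1.isPrefix_of_places_eq_empty C.2.1 hAe, .refl⟩
  have hQ₁P₂ : SwapEquiv Q₁.normalize P₂.normalize :=
    SwapEquiv.normalize ((hQ₁B.trans (swapEquiv_of_bdClass_eq hB'.symm)).trans hB'P₂)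
  have hP₂ : IsProcessOn N P₂.normalize := (B'.2.1.isProcessOn.of_swapEquiv hB'P₂).normalize
  have hQ₂ : IsProcessOn N Q₂.normalize := (C.2.1.isProcessOn.of_swapEquiv_rev hQ₂C).normalize
  obtain ⟨gS, gT, G, eG, hGQ₂⟩ :=
    (hP₂Q₂.normalize.prefixEmbedding hP₂ hQ₂ flowSupported_restrict).pullback hQ₁P₂
  obtain ⟨P₃, hP₁P₃, hP₃G⟩ := eG.exists_iso_isPrefix hP₁Q₁.normalize
  have hAP₁ := hAP₁.normalize
  have hQ₂C := hQ₂C.normalize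
  rw [normalize_eq_self A.2.1.flowSupported] at hAP₁
  rw [normalize_eq_self C.2.1.flowSupported] at hQ₂C
  exact ⟨A, C, rfl, rfl, P₃, G, hAP₁.trans_iso hP₁P₃ hAne A.2.1.isAcyclic, hP₃G,
    hGQ₂.trans hQ₂C⟩

end Runs

/-- Lemma 7 of the paper: for any GR-process `P` of `N`, the
prefix-closure `⌊P⌋ = ↓{⟦P'⟧ | P' ≤ P, P' finite}` is a BD-run of `N`. -/
theorem bdify_isBDRun {S T α β : Type*} (N : Net S T)
    (P : RawProc S T α β) (hP : IsProcessOf N P) :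
    IsBDRun N (BDify N P) := by
  refine ⟨fun x y hxy ⟨Q, hQP, hyQ⟩ => ⟨Q, hQP, bdRunLE_trans hxy hyQ⟩, ?_⟩
  rintro x ⟨Q₁, hQ₁P, hxQ₁⟩ y ⟨Q₂, hQ₂P, hyQ₂⟩
  obtain ⟨R, hRP, hQ₁R, hQ₂R⟩ := hP.exists_finite_prefix_above Q₁ Q₂ hQ₁P hQ₂P
  exact ⟨bdClass N R, ⟨R, hRP, bdRunLE_of_isPrefix (RawProc.isPrefix_refl _)⟩,
    bdRunLE_trans hxQ₁ (bdRunLE_of_isPrefix hQ₁R),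
    bdRunLE_trans hyQ₂ (bdRunLE_of_isPrefix hQ₂R)⟩
end

section
/- Let N be a net. Then every GR-process P of N is a prefix of a maximal GR-process of N (a process having no proper extension). -/
open scoped Classical

noncomputable section

/-! Zorn's lemma, for the prefix order on the processes of `N` extending `P`: the union of a
chain of processes is again a process. An extension never changes the preset or postset of an
old transition, since the arc weights of `N` are already used up by the old arcs, nor the
producer of an old place, since places are unbranched and only places without producer are
initially marked. Hence the arcs of the union are well defined, each transition has the same
causal past in the union as in any member containing it, and every axiom of a process is
witnessed inside a single member of the chain. -/

theorem finsum_mem_fiber_congr {ι σ M : Type*} [AddCommMonoid M] {f : ι → M} {π π' : ι → σ}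
    (h : ∀ i, f i ≠ 0 → π i = π' i) (s : σ) :
    ∑ᶠ i ∈ {i | π i = s}, f i = ∑ᶠ i ∈ {i | π' i = s}, f i := by
  have hfib : {i | π i = s} ∩ Function.support f = {i | π' i = s} ∩ Function.support f := by
    ext i
    exact ⟨fun ⟨hi, hf⟩ => ⟨(h i hf).symm.trans hi, hf⟩, fun ⟨hi, hf⟩ => ⟨(h i hf).trans hi, hf⟩⟩
  rw [← finsum_mem_inter_support, hfib, finsum_mem_inter_support]

theorem eq_of_finsum_mem_fiber_eq {ι σ : Type*} {f g : ι → ℕ} {π π' : ι → σ} {s : σ}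
    (hg : (Function.support g).Finite) (hfg : ∀ i, f i ≠ 0 → f i = g i ∧ π i = π' i)
    (hsum : ∑ᶠ i ∈ {i | π i = s}, f i = ∑ᶠ i ∈ {i | π' i = s}, g i)
    {j : ι} (hj : π' j = s) : f j = g j := by
  have hfin : ({i | π' i = s} ∩ Function.support g).Finite := hg.subset Set.inter_subset_right
  have hf_le_g : ∀ i, f i ≤ g i := fun i => by
    by_cases hi : f i = 0
    · exact hi ▸ Nat.zero_le _
    · exact (hfg i hi).1.le
  have hsum_fin : ∑ i ∈ hfin.toFinset, f i = ∑ i ∈ hfin.toFinset, g i := calc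
    ∑ i ∈ hfin.toFinset, f i = ∑ᶠ i ∈ {i | π' i = s}, f i := by
      refine (finsum_mem_eq_sum_of_subset _ (fun i ⟨hi, hfi⟩ => ?_)
        fun i hi => (hfin.mem_toFinset.1 hi).1).symm
      exact hfin.mem_toFinset.2 ⟨hi, fun hgi => hfi (Nat.eq_zero_of_le_zero (hgi ▸ hf_le_g i))⟩
    _ = ∑ᶠ i ∈ {i | π i = s}, f i := (finsum_mem_fiber_congr (fun i hi => (hfg i hi).2) s).symm
    _ = ∑ i ∈ hfin.toFinset, g i := by rw [hsum, finsum_mem_eq_sum _ hfin]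
  by_cases hgj : g j = 0
  · exact (Nat.eq_zero_of_le_zero (hgj ▸ hf_le_g j)).trans hgj.symm
  · exact (Finset.sum_eq_sum_iff_of_le fun i _ => hf_le_g i).1 hsum_fin j
      (hfin.mem_toFinset.2 ⟨hj, hgj⟩)

theorem IsChain.apply_eq_apply {γ δ : Type*} [Preorder γ] {c : Set γ} (hc : IsChain (· ≤ ·) c)
    {p : γ → Prop} {f : γ → δ} (h : ∀ a ∈ c, ∀ b ∈ c, a ≤ b → p a → f a = f b)
    {a b : γ} (ha : a ∈ c) (hb : b ∈ c) (hpa : p a) (hpb : p b) : f a = f b := by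
  rcases hc.total ha hb with hab | hba
  · exact h a ha b hb hab hpa
  · exact (h b hb a ha hba hpb).symm

namespace RawProc

variable {S T α β : Type*} {N : Net S T} {P Q R : RawProc S T α β} {p : α} {t : β}
  {x y : α ⊕ β}

theorem IsPrefix.places_subset (h : Q.IsPrefix R) : Q.places ⊆ R.places := h.1

theorem IsPrefix.transitions_subset (h : Q.IsPrefix R) : Q.transitions ⊆ R.transitions := h.2.1

theorem IsPrefix.initMark_eq (h : Q.IsPrefix R) : Q.initMark = R.initMark := h.2.2.1

theorem IsPrefix.projS_eq (h : Q.IsPrefix R) (hp : p ∈ Q.places) : Q.projS p = R.projS p :=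
  h.2.2.2.2.1 p hp

theorem IsPrefix.projT_eq (h : Q.IsPrefix R) (ht : t ∈ Q.transitions) :
    Q.projT t = R.projT t :=
  h.2.2.2.2.2 t ht

theorem IsPrefix.flowPT_eq (h : Q.IsPrefix R) (hp : p ∈ Q.places) (ht : t ∈ Q.transitions) :
    Q.flowPT p t = R.flowPT p t :=
  (h.2.2.2.1 p hp t ht).1

theorem IsPrefix.flowTP_eq (h : Q.IsPrefix R) (hp : p ∈ Q.places) (ht : t ∈ Q.transitions) :
    Q.flowTP t p = R.flowTP t p :=
  (h.2.2.2.1 p hp t ht).2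

theorem IsPrefix.refl (P : RawProc S T α β) : P.IsPrefix P :=
  ⟨subset_rfl, subset_rfl, rfl, fun _ _ _ _ => ⟨rfl, rfl⟩, fun _ _ => rfl, fun _ _ => rfl⟩

theorem IsPrefix.trans (h₁ : P.IsPrefix Q) (h₂ : Q.IsPrefix R) : P.IsPrefix R := by
  refine ⟨h₁.places_subset.trans h₂.places_subset,
    h₁.transitions_subset.trans h₂.transitions_subset, h₁.initMark_eq.trans h₂.initMark_eq,
    fun p hp t ht => ?_, fun p hp => (h₁.projS_eq hp).trans (h₂.projS_eq (h₁.places_subset hp)),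
    fun t ht => (h₁.projT_eq ht).trans (h₂.projT_eq (h₁.transitions_subset ht))⟩
  have hp₂ := h₁.places_subset hp
  have ht₂ := h₁.transitions_subset ht
  exact ⟨(h₁.flowPT_eq hp ht).trans (h₂.flowPT_eq hp₂ ht₂),
    (h₁.flowTP_eq hp ht).trans (h₂.flowTP_eq hp₂ ht₂)⟩

instance : Preorder (RawProc S T α β) where
  le := IsPrefix
  le_refl := IsPrefix.refl
  le_trans _ _ _ := IsPrefix.trans

def nodes (P : RawProc S T α β) : Set (α ⊕ β) :=
  {x | Sum.elim (· ∈ P.places) (· ∈ P.transitions) x}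

theorem _root_.IsProcessOf.mem_nodes_of_flowRel (hQ : IsProcessOf N Q) (h : Q.flowRel x y) :
    x ∈ Q.nodes ∧ y ∈ Q.nodes := by
  rcases x with p | u <;> rcases y with q | t
  · exact h.elim
  · exact hQ.flowPT_dom p t h
  · exact (hQ.flowTP_dom u q h).symm
  · exact h.elim

theorem IsPrefix.flowPT_eq_of_ne_zero (hQ : IsProcessOf N Q) (h : Q.IsPrefix R)
    (hpt : Q.flowPT p t ≠ 0) : Q.flowPT p t = R.flowPT p t :=
  h.flowPT_eq (hQ.flowPT_dom p t hpt).1 (hQ.flowPT_dom p t hpt).2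

theorem IsPrefix.flowTP_eq_of_ne_zero (hQ : IsProcessOf N Q) (h : Q.IsPrefix R)
    (htp : Q.flowTP t p ≠ 0) : Q.flowTP t p = R.flowTP t p :=
  h.flowTP_eq (hQ.flowTP_dom t p htp).1 (hQ.flowTP_dom t p htp).2

theorem IsPrefix.flowRel (hQ : IsProcessOf N Q) (h : Q.IsPrefix R) (hxy : Q.flowRel x y) :
    R.flowRel x y := by
  rcases x with p | u <;> rcases y with q | t
  · exact hxy.elim
  · exact (h.flowPT_eq_of_ne_zero hQ hxy).symm.trans_ne hxy
  · exact (h.flowTP_eq_of_ne_zero hQ hxy).symm.trans_ne hxy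
  · exact hxy.elim

theorem IsPrefix.causal (hQ : IsProcessOf N Q) (h : Q.IsPrefix R) (hxy : Q.causal x y) :
    R.causal x y :=
  Relation.TransGen.mono (fun _ _ => h.flowRel hQ) _ _ hxy

theorem IsPrefix.flowPT_eq_of_mem_transitions (hQ : IsProcessOf N Q) (hR : IsProcessOf N R)
    (h : Q.IsPrefix R) (ht : t ∈ Q.transitions) (p : α) : Q.flowPT p t = R.flowPT p t := by
  refine eq_of_finsum_mem_fiber_eq (f := (Q.flowPT · t)) (g := (R.flowPT · t))
    (π := Q.projS) (π' := R.projS) (hR.t_pre_fin t (h.transitions_subset ht))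
    (fun q hq => ⟨h.flowPT_eq_of_ne_zero hQ hq, h.projS_eq (hQ.flowPT_dom q t hq).1⟩) ?_ rfl
  rw [hR.proj_pre t (h.transitions_subset ht), hQ.proj_pre t ht, h.projT_eq ht]

theorem IsPrefix.flowTP_eq_of_mem_transitions (hQ : IsProcessOf N Q) (hR : IsProcessOf N R)
    (h : Q.IsPrefix R) (ht : t ∈ Q.transitions) (p : α) : Q.flowTP t p = R.flowTP t p := by
  refine eq_of_finsum_mem_fiber_eq (f := Q.flowTP t) (g := R.flowTP t)
    (π := Q.projS) (π' := R.projS) (hR.t_post_fin t (h.transitions_subset ht))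
    (fun q hq => ⟨h.flowTP_eq_of_ne_zero hQ hq, h.projS_eq (hQ.flowTP_dom t q hq).1⟩) ?_ rfl
  rw [hR.proj_post t (h.transitions_subset ht), hQ.proj_post t ht, h.projT_eq ht]

theorem IsPrefix.flowTP_eq_of_mem_places (hQ : IsProcessOf N Q) (hR : IsProcessOf N R)
    (h : Q.IsPrefix R) (hp : p ∈ Q.places) (t : β) : Q.flowTP t p = R.flowTP t p := by
  by_cases hQt : Q.flowTP t p = 0
  · rw [hQt]
    by_contra hRt
    by_cases hprod : ∃ u, Q.flowTP u p ≠ 0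
    · obtain ⟨u, hu⟩ := hprod
      have hRu : R.flowTP u p ≠ 0 := (h.flowTP_eq_of_ne_zero hQ hu).symm.trans_ne hu
      exact hu ((hR.pre_place p (h.places_subset hp)).1 (Ne.symm hRt) hRu ▸ hQt)
    · have hinit := hQ.init_one p hp (not_exists_not.1 hprod)
      rw [h.initMark_eq, hR.init_zero p (h.places_subset hp) ⟨t, Ne.symm hRt⟩] at hinit
      exact zero_ne_one hinit
  · exact h.flowTP_eq_of_ne_zero hQ hQt

theorem IsPrefix.flowRel_of_mem_nodes (hQ : IsProcessOf N Q) (hR : IsProcessOf N R)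
    (h : Q.IsPrefix R) (hxy : R.flowRel x y) (hy : y ∈ Q.nodes) : Q.flowRel x y := by
  rcases x with p | u <;> rcases y with q | t
  · exact hxy.elim
  · exact (h.flowPT_eq_of_mem_transitions hQ hR hy p).trans_ne hxy
  · exact (h.flowTP_eq_of_mem_places hQ hR hy u).trans_ne hxy
  · exact hxy.elim

theorem IsPrefix.causal_of_mem_nodes (hQ : IsProcessOf N Q) (hR : IsProcessOf N R)
    (h : Q.IsPrefix R) (hxy : R.causal x y) (hy : y ∈ Q.nodes) : Q.causal x y := by
  induction hxy with
  | single hxy => exact .single (h.flowRel_of_mem_nodes hQ hR hxy hy)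
  | tail _ hzy ih =>
    have hzy := h.flowRel_of_mem_nodes hQ hR hzy hy
    exact .tail (ih (hQ.mem_nodes_of_flowRel hzy).1) hzy

/-- `R₀` is meant to be a member of `c`; all members share its initial marking. -/
def chainUnion (c : Set (RawProc S T α β)) (R₀ : RawProc S T α β) : RawProc S T α β where
  places := {p | ∃ A ∈ c, p ∈ A.places}
  transitions := {t | ∃ A ∈ c, t ∈ A.transitions}
  flowPT p t := if h : ∃ A ∈ c, t ∈ A.transitions then h.choose.flowPT p t else 0
  flowTP t p := if h : ∃ A ∈ c, t ∈ A.transitions then h.choose.flowTP t p else 0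
  initMark := R₀.initMark
  projS p := if h : ∃ A ∈ c, p ∈ A.places then h.choose.projS p else R₀.projS p
  projT t := if h : ∃ A ∈ c, t ∈ A.transitions then h.choose.projT t else R₀.projT t

section ChainUnion

variable {c : Set (RawProc S T α β)} {R₀ A : RawProc S T α β}

theorem chainUnion_projS (hchain : IsChain (· ≤ ·) c) (hA : A ∈ c) (hp : p ∈ A.places) :
    (chainUnion c R₀).projS p = A.projS p := by
  have h : ∃ B ∈ c, p ∈ B.places := ⟨A, hA, hp⟩
  exact (dif_pos h).trans (hchain.apply_eq_apply (p := (p ∈ ·.places)) (f := (·.projS p))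
    (fun _ _ _ _ hBC hpB => hBC.projS_eq hpB) h.choose_spec.1 hA h.choose_spec.2 hp)

theorem chainUnion_projT (hchain : IsChain (· ≤ ·) c) (hA : A ∈ c) (ht : t ∈ A.transitions) :
    (chainUnion c R₀).projT t = A.projT t := by
  have h : ∃ B ∈ c, t ∈ B.transitions := ⟨A, hA, ht⟩
  exact (dif_pos h).trans (hchain.apply_eq_apply (p := (t ∈ ·.transitions)) (f := (·.projT t))
    (fun _ _ _ _ hBC htB => hBC.projT_eq htB) h.choose_spec.1 hA h.choose_spec.2 ht)

theorem chainUnion_flowPT (hc : ∀ A ∈ c, IsProcessOf N A) (hchain : IsChain (· ≤ ·) c)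
    (hA : A ∈ c) (ht : t ∈ A.transitions) (p : α) :
    (chainUnion c R₀).flowPT p t = A.flowPT p t := by
  have h : ∃ B ∈ c, t ∈ B.transitions := ⟨A, hA, ht⟩
  exact (dif_pos h).trans (hchain.apply_eq_apply (p := (t ∈ ·.transitions))
    (f := (·.flowPT p t)) (fun B hB C hC hBC htB =>
      hBC.flowPT_eq_of_mem_transitions (hc B hB) (hc C hC) htB p)
    h.choose_spec.1 hA h.choose_spec.2 ht)

theorem chainUnion_flowTP_of_mem_transitions (hc : ∀ A ∈ c, IsProcessOf N A)
    (hchain : IsChain (· ≤ ·) c) (hA : A ∈ c) (ht : t ∈ A.transitions) (p : α) :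
    (chainUnion c R₀).flowTP t p = A.flowTP t p := by
  have h : ∃ B ∈ c, t ∈ B.transitions := ⟨A, hA, ht⟩
  exact (dif_pos h).trans (hchain.apply_eq_apply (p := (t ∈ ·.transitions))
    (f := (·.flowTP t p)) (fun B hB C hC hBC htB =>
      hBC.flowTP_eq_of_mem_transitions (hc B hB) (hc C hC) htB p)
    h.choose_spec.1 hA h.choose_spec.2 ht)

theorem exists_mem_transitions_of_chainUnion_flowPT_ne_zero
    (h : (chainUnion c R₀).flowPT p t ≠ 0) : ∃ A ∈ c, t ∈ A.transitions := by
  by_contra hc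
  exact h (dif_neg hc)

theorem exists_mem_transitions_of_chainUnion_flowTP_ne_zero
    (h : (chainUnion c R₀).flowTP t p ≠ 0) : ∃ A ∈ c, t ∈ A.transitions := by
  by_contra hc
  exact h (dif_neg hc)

theorem chainUnion_flowTP_of_mem_places (hc : ∀ A ∈ c, IsProcessOf N A)
    (hchain : IsChain (· ≤ ·) c) (hA : A ∈ c) (hp : p ∈ A.places) (t : β) :
    (chainUnion c R₀).flowTP t p = A.flowTP t p := by
  by_cases ht : ∃ B ∈ c, t ∈ B.transitions
  · obtain ⟨B, hB, htB⟩ := ht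
    rw [chainUnion_flowTP_of_mem_transitions hc hchain hB htB]
    rcases hchain.total hB hA with hBA | hAB
    · exact hBA.flowTP_eq_of_mem_transitions (hc B hB) (hc A hA) htB p
    · exact (hAB.flowTP_eq_of_mem_places (hc A hA) (hc B hB) hp t).symm
  · refine (dif_neg ht).trans (not_not.1 fun htp => ht ⟨A, hA, ?_⟩)
    exact ((hc A hA).flowTP_dom t p (Ne.symm htp)).2

theorem exists_flowRel_of_chainUnion_flowRel (hc : ∀ A ∈ c, IsProcessOf N A)
    (hchain : IsChain (· ≤ ·) c) (hxy : (chainUnion c R₀).flowRel x y) :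
    ∃ A ∈ c, A.flowRel x y := by
  rcases x with p | u <;> rcases y with q | t
  · exact hxy.elim
  · obtain ⟨A, hA, ht⟩ := exists_mem_transitions_of_chainUnion_flowPT_ne_zero hxy
    exact ⟨A, hA, (chainUnion_flowPT hc hchain hA ht p).symm.trans_ne hxy⟩
  · obtain ⟨A, hA, hu⟩ := exists_mem_transitions_of_chainUnion_flowTP_ne_zero hxy
    exact ⟨A, hA, (chainUnion_flowTP_of_mem_transitions hc hchain hA hu q).symm.trans_ne hxy⟩
  · exact hxy.elim

theorem exists_causal_of_chainUnion_causal (hc : ∀ A ∈ c, IsProcessOf N A)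
    (hchain : IsChain (· ≤ ·) c) (hxy : (chainUnion c R₀).causal x y) :
    ∃ A ∈ c, A.causal x y := by
  induction hxy with
  | single hxy =>
    obtain ⟨A, hA, hxy⟩ := exists_flowRel_of_chainUnion_flowRel hc hchain hxy
    exact ⟨A, hA, .single hxy⟩
  | tail _ hzy ih =>
    obtain ⟨A, hA, hxz⟩ := ih
    obtain ⟨B, hB, hzy⟩ := exists_flowRel_of_chainUnion_flowRel hc hchain hzy
    obtain ⟨C, hC, hAC, hBC⟩ := hchain.directedOn A hA B hB
    exact ⟨C, hC, .tail (hAC.causal (hc A hA) hxz) (hBC.flowRel (hc B hB) hzy)⟩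

theorem causal_inr_of_chainUnion_causal (hc : ∀ A ∈ c, IsProcessOf N A)
    (hchain : IsChain (· ≤ ·) c) (hA : A ∈ c) (ht : t ∈ A.transitions)
    (hxt : (chainUnion c R₀).causal x (.inr t)) : A.causal x (.inr t) := by
  obtain ⟨B, hB, hxt⟩ := exists_causal_of_chainUnion_causal hc hchain hxt
  rcases hchain.total hB hA with hBA | hAB
  · exact hBA.causal (hc B hB) hxt
  · exact hAB.causal_of_mem_nodes (hc A hA) (hc B hB) hxt ht

theorem le_chainUnion (hc : ∀ A ∈ c, IsProcessOf N A) (hchain : IsChain (· ≤ ·) c)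
    (hR₀ : R₀ ∈ c) (hA : A ∈ c) : A.IsPrefix (chainUnion c R₀) := by
  refine ⟨fun p hp => ⟨A, hA, hp⟩, fun t ht => ⟨A, hA, ht⟩, ?_, fun p _ t ht => ?_,
    fun p hp => (chainUnion_projS hchain hA hp).symm,
    fun t ht => (chainUnion_projT hchain hA ht).symm⟩
  · exact hchain.apply_eq_apply (p := fun _ => True) (f := initMark) (b := R₀)
      (fun _ _ _ _ hBC _ => hBC.initMark_eq) hA hR₀ trivial trivial
  · exact ⟨(chainUnion_flowPT hc hchain hA ht p).symm,
      (chainUnion_flowTP_of_mem_transitions hc hchain hA ht p).symm⟩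

theorem chainUnion_post_place (hc : ∀ A ∈ c, IsProcessOf N A) (hchain : IsChain (· ≤ ·) c)
    (p : α) : {t | (chainUnion c R₀).flowPT p t ≠ 0}.Subsingleton ∧
      ∀ t, (chainUnion c R₀).flowPT p t ≤ 1 := by
  refine ⟨fun t ht t' ht' => ?_, fun t => ?_⟩
  · obtain ⟨B, hB, htB⟩ := exists_mem_transitions_of_chainUnion_flowPT_ne_zero ht
    obtain ⟨B', hB', htB'⟩ := exists_mem_transitions_of_chainUnion_flowPT_ne_zero ht'
    obtain ⟨C, hC, hBC, hB'C⟩ := hchain.directedOn B hB B' hB'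
    have hCt : C.flowPT p t ≠ 0 :=
      (chainUnion_flowPT hc hchain hC (hBC.transitions_subset htB) p).symm.trans_ne ht
    have hCt' : C.flowPT p t' ≠ 0 :=
      (chainUnion_flowPT hc hchain hC (hB'C.transitions_subset htB') p).symm.trans_ne ht'
    exact ((hc C hC).post_place p ((hc C hC).flowPT_dom p t hCt).1).1 hCt hCt'
  · by_cases ht : (chainUnion c R₀).flowPT p t = 0
    · exact ht ▸ zero_le_one
    obtain ⟨B, hB, htB⟩ := exists_mem_transitions_of_chainUnion_flowPT_ne_zero ht
    rw [chainUnion_flowPT hc hchain hB htB] at ht ⊢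
    exact ((hc B hB).post_place p ((hc B hB).flowPT_dom p t ht).1).2 t

theorem chainUnion_proj_pre (hc : ∀ A ∈ c, IsProcessOf N A) (hchain : IsChain (· ≤ ·) c)
    (ht : t ∈ (chainUnion c R₀).transitions) (s : S) :
    ∑ᶠ p ∈ {p | (chainUnion c R₀).projS p = s}, (chainUnion c R₀).flowPT p t =
      N.pre ((chainUnion c R₀).projT t) s := by
  obtain ⟨A, hA, ht⟩ := ht
  simp only [chainUnion_flowPT hc hchain hA ht, chainUnion_projT hchain hA ht]
  rw [finsum_mem_fiber_congr
    (fun p hp => chainUnion_projS hchain hA ((hc A hA).flowPT_dom p t hp).1) s]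
  exact (hc A hA).proj_pre t ht s

theorem chainUnion_proj_post (hc : ∀ A ∈ c, IsProcessOf N A) (hchain : IsChain (· ≤ ·) c)
    (ht : t ∈ (chainUnion c R₀).transitions) (s : S) :
    ∑ᶠ p ∈ {p | (chainUnion c R₀).projS p = s}, (chainUnion c R₀).flowTP t p =
      N.post ((chainUnion c R₀).projT t) s := by
  obtain ⟨A, hA, ht⟩ := ht
  simp only [chainUnion_flowTP_of_mem_transitions hc hchain hA ht, chainUnion_projT hchain hA ht]
  rw [finsum_mem_fiber_congr
    (fun p hp => chainUnion_projS hchain hA ((hc A hA).flowTP_dom t p hp).1) s]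
  exact (hc A hA).proj_post t ht s

theorem isProcessOf_chainUnion (hc : ∀ A ∈ c, IsProcessOf N A) (hchain : IsChain (· ≤ ·) c)
    (hR₀ : R₀ ∈ c) : IsProcessOf N (chainUnion c R₀) where
  flowPT_dom p t h := by
    obtain ⟨A, hA, ht⟩ := exists_mem_transitions_of_chainUnion_flowPT_ne_zero h
    rw [chainUnion_flowPT hc hchain hA ht] at h
    exact ⟨⟨A, hA, ((hc A hA).flowPT_dom p t h).1⟩, ⟨A, hA, ht⟩⟩
  flowTP_dom t p h := by
    obtain ⟨A, hA, ht⟩ := exists_mem_transitions_of_chainUnion_flowTP_ne_zero h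
    rw [chainUnion_flowTP_of_mem_transitions hc hchain hA ht] at h
    exact ⟨⟨A, hA, ((hc A hA).flowTP_dom t p h).1⟩, ⟨A, hA, ht⟩⟩
  initMark_dom p hp := (hc R₀ hR₀).initMark_dom p fun h => hp ⟨R₀, hR₀, h⟩
  pre_place := by
    rintro p ⟨A, hA, hp⟩
    simpa only [chainUnion_flowTP_of_mem_places hc hchain hA hp] using (hc A hA).pre_place p hp
  post_place p _ := chainUnion_post_place hc hchain p
  init_one := by
    rintro p ⟨A, hA, hp⟩ h
    simp only [chainUnion_flowTP_of_mem_places hc hchain hA hp] at h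
    exact (le_chainUnion hc hchain hR₀ hA).initMark_eq ▸ (hc A hA).init_one p hp h
  init_zero := by
    rintro p ⟨A, hA, hp⟩ h
    simp only [chainUnion_flowTP_of_mem_places hc hchain hA hp] at h
    exact (le_chainUnion hc hchain hR₀ hA).initMark_eq ▸ (hc A hA).init_zero p hp h
  acyclic x hx := by
    obtain ⟨A, hA, hx⟩ := exists_causal_of_chainUnion_causal hc hchain hx
    exact (hc A hA).acyclic x hx
  finite_past := by
    rintro t ⟨A, hA, ht⟩
    exact ((hc A hA).finite_past t ht).subset
      fun u hu => causal_inr_of_chainUnion_causal hc hchain hA ht hu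
  t_pre_fin := by
    rintro t ⟨A, hA, ht⟩
    simpa only [chainUnion_flowPT hc hchain hA ht] using (hc A hA).t_pre_fin t ht
  t_pre_ne := by
    rintro t ⟨A, hA, ht⟩
    simpa only [chainUnion_flowPT hc hchain hA ht] using (hc A hA).t_pre_ne t ht
  t_post_fin := by
    rintro t ⟨A, hA, ht⟩
    simpa only [chainUnion_flowTP_of_mem_transitions hc hchain hA ht] using
      (hc A hA).t_post_fin t ht
  proj_init_fin s := ((hc R₀ hR₀).proj_init_fin s).subset fun p ⟨hps, hp⟩ =>
    ⟨(chainUnion_projS hchain hR₀ (Not.imp_symm ((hc R₀ hR₀).initMark_dom p) hp)).symm.trans hps,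
      hp⟩
  proj_init s := (finsum_mem_fiber_congr (fun p hp =>
    chainUnion_projS hchain hR₀ (Not.imp_symm ((hc R₀ hR₀).initMark_dom p) hp)) s).trans
      ((hc R₀ hR₀).proj_init s)
  proj_pre t ht s := chainUnion_proj_pre hc hchain ht s
  proj_post t ht s := chainUnion_proj_post hc hchain ht s

end ChainUnion

end RawProc

/-- Lemma 8 of the paper: every GR-process `P` of `N` is a
prefix of a maximal GR-process of `N`, i.e. of one without proper extension. -/
theorem exists_maximal_extension {S T α β : Type*} (N : Net S T)
    (P : RawProc S T α β) (hP : IsProcessOf N P) :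
    ∃ Q : RawProc S T α β, IsProcessOf N Q ∧ RawProc.IsPrefix P Q ∧
      ∀ R : RawProc S T α β, IsProcessOf N R →
        RawProc.IsPrefix Q R → RawProc.IsPrefix R Q := by
  obtain ⟨Q, hPQ, hQ, hQmax⟩ := zorn_le_nonempty₀ {R | IsProcessOf N R}
    (fun c hc hchain R₀ hR₀ => ⟨RawProc.chainUnion c R₀,
      RawProc.isProcessOf_chainUnion hc hchain hR₀,
      fun _ hA => RawProc.le_chainUnion hc hchain hR₀ hA⟩) P hP
  exact ⟨Q, hQ, hPQ, fun R hR hQR => hQmax hR hQR⟩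
end
end

section
/- Let N be a net and ρ', ρ, μ, σ firing sequences of N such that ρ' ↔* ρ, ρ is a prefix of μ, and μ ↔* σ. Then there exists a firing sequence μ' of N such that ρ' is a prefix of μ' and μ' ↔* μ. (Consequently, the prefix relation on partial FS-runs, [σ] ≤ [ρ] iff ∃μ with σ a prefix of μ and μ ↔* ρ, is well-defined and a partial order.) -/
open scoped Classical

/-! Adjacency only looks at a prefix of a firing sequence: a swap of concurrently enabled
neighbours `t u` after `σ₁` can be performed just as well in any firing sequence extending
`σ₁ u t`, since `u t` and `t u` lead from the same marking to the same marking. Appending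
the suffix `r` of `μ = ρ ++ r` to every sequence along `ρ' ↔* ρ` therefore yields
`μ' = ρ' ++ r ↔* μ`. -/

namespace Net

variable {S T : Type*} {N : Net S T}

theorem fireSeq_append {M M' : S → ℕ} {σ ρ : List T} :
    N.FireSeq M (σ ++ ρ) M' ↔ ∃ M₁, N.FireSeq M σ M₁ ∧ N.FireSeq M₁ ρ M' := by
  induction σ generalizing M with
  | nil => simp [FireSeq]
  | cons t σ ih =>
    simp only [List.cons_append, FireSeq, ih]
    exact ⟨fun ⟨M₁, hs, M₂, h₁, h₂⟩ => ⟨M₂, ⟨M₁, hs, h₁⟩, h₂⟩,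
      fun ⟨M₂, ⟨M₁, hs, h₁⟩, h₂⟩ => ⟨M₁, hs, M₂, h₁, h₂⟩⟩

theorem fireSeq_deterministic {M M₁ M₂ : S → ℕ} {σ : List T}
    (h₁ : N.FireSeq M σ M₁) (h₂ : N.FireSeq M σ M₂) : M₁ = M₂ := by
  induction σ generalizing M with
  | nil => exact h₁.trans h₂.symm
  | cons t σ ih =>
    obtain ⟨Ma, ha, h₁⟩ := h₁
    obtain ⟨Mb, hb, h₂⟩ := h₂
    obtain rfl : Ma = Mb := funext fun s => (ha.2 s).trans (hb.2 s).symm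
    exact ih h₁ h₂

theorem step_singleton_iff {M M' : S → ℕ} {t : T} :
    N.Step M {t} M' ↔ (∀ s, N.pre t s ≤ M s) ∧ ∀ s, M' s = M s - N.pre t s + N.post t s := by
  simp [Step, Enabled, preM, postM]

theorem enabled_pair_iff {M : S → ℕ} {t u : T} :
    N.Enabled M (t ::ₘ {u}) ↔ ∀ s, N.pre t s + N.pre u s ≤ M s := by
  simp [Enabled, preM]

theorem fireSeq_swap_of_enabled_pair {M M' : S → ℕ} {t u : T} {τ : List T}
    (hE : N.Enabled M (t ::ₘ {u})) (h : N.FireSeq M (u :: t :: τ) M') :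
    N.FireSeq M (t :: u :: τ) M' := by
  obtain ⟨M₁, hu, M₂, ht, hτ⟩ := h
  rw [enabled_pair_iff] at hE
  rw [step_singleton_iff] at hu ht
  refine ⟨fun s => M s - N.pre t s + N.post t s, ?_, M₂, ?_, hτ⟩
  · exact step_singleton_iff.2 ⟨fun s => by have := hE s; omega, fun _ => rfl⟩
  · refine step_singleton_iff.2 ⟨fun s => ?_, fun s => ?_⟩
    · have := hE s; omega
    · have := hE s; have := hu.2 s; have := ht.2 s; omega

theorem Adjacent.append_right {a b r : List T} (hab : N.Adjacent a b) (hbr : N.FS (b ++ r)) :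
    N.Adjacent (a ++ r) (b ++ r) := by
  obtain ⟨-, -, σ₁, t, u, σ₂, M, rfl, rfl, hσ₁, hE⟩ := hab
  obtain ⟨M', hM'⟩ := hbr
  simp only [List.append_assoc, List.cons_append] at hM' ⊢
  obtain ⟨M₁, hσ₁', hrest⟩ := fireSeq_append.1 hM'
  obtain rfl := fireSeq_deterministic hσ₁' hσ₁
  have har : N.FS (σ₁ ++ t :: u :: (σ₂ ++ r)) :=
    ⟨M', fireSeq_append.2 ⟨M₁, hσ₁, fireSeq_swap_of_enabled_pair hE hrest⟩⟩
  exact ⟨har, ⟨M', hM'⟩, σ₁, t, u, σ₂ ++ r, M₁, rfl, rfl, hσ₁, hE⟩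

theorem AdjEquiv.fs_of_fs_right {a b : List T} (hab : N.AdjEquiv a b) (hb : N.FS b) : N.FS a := by
  rcases hab.cases_head with rfl | ⟨_, hac, -⟩
  exacts [hb, hac.1]

theorem AdjEquiv.append_right {a b r : List T} (hab : N.AdjEquiv a b) (hbr : N.FS (b ++ r)) :
    N.AdjEquiv (a ++ r) (b ++ r) := by
  induction hab using Relation.ReflTransGen.head_induction_on with
  | refl => exact .refl
  | head hac _ ih => exact .head (hac.append_right (ih.fs_of_fs_right hbr)) ih

end Net

theorem fsRun_le_well_defined_general {S T : Type*} (N : Net S T)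
    (ρ' ρ μ : List T)
    (hμ : N.FS μ)
    (h1 : N.AdjEquiv ρ' ρ) (h2 : ρ <+: μ) :
    ∃ μ' : List T, N.FS μ' ∧ ρ' <+: μ' ∧ N.AdjEquiv μ' μ := by
  obtain ⟨r, rfl⟩ := h2
  have hequiv := h1.append_right hμ
  exact ⟨ρ' ++ r, hequiv.fs_of_fs_right hμ, List.prefix_append ρ' r, hequiv⟩

/-- `ρ' ↔* ρ ≤ μ ↔* σ` implies `∃ μ'. ρ' ≤ μ' ↔* μ`;
hence the prefix relation on partial FS-runs is well-defined. -/
theorem fsRun_le_well_defined {S T : Type*} (N : Net S T)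
    (ρ' ρ μ σ : List T)
    (hρ' : N.FS ρ') (hρ : N.FS ρ) (hμ : N.FS μ) (hσ : N.FS σ)
    (h1 : N.AdjEquiv ρ' ρ) (h2 : ρ <+: μ) (h3 : N.AdjEquiv μ σ) :
    ∃ μ' : List T, N.FS μ' ∧ ρ' <+: μ' ∧ N.AdjEquiv μ' μ :=
  fsRun_le_well_defined_general N ρ' ρ μ hμ h1 h2
end

section
/- Let N be a structural conflict net, M a marking reachable from M₀, and G a finite non-empty multiset of transitions such that M →(G↾{t}) for every t ∈ G. Then G is in (semantic) conflict in M if and only if G is a set (G(t) ≤ 1 for all t) and there exist two distinct transitions t, u ∈ G such that the set {t,u} is in conflict in M. -/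
open scoped Classical

/-!
No transition of a structural conflict net can be enabled concurrently with itself in a
reachable marking, since it shares its non-empty preset with itself; hence `G` is a set.
If no two members of `G` were in conflict, every pair would be enabled, so their presets
would be disjoint, and then the individually enabled members of `G` draw on disjoint
tokens and are enabled together.
-/

namespace Net

variable {S T : Type*} {N : Net S T} {M : S → ℕ} {G H : Multiset T}

lemma preM_add (G H : Multiset T) (s : S) :
    N.preM (G + H) s = N.preM G s + N.preM H s := by
  simp [preM]

lemma preM_mono (hHG : H ≤ G) (s : S) : N.preM H s ≤ N.preM G s := by
  obtain ⟨D, rfl⟩ := Multiset.le_iff_exists_add.mp hHG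
  simp [preM_add]

lemma preM_singleton (t : T) (s : S) : N.preM {t} s = N.pre t s := by
  simp [preM]

lemma preM_eq_zero {s : S} (h : ∀ t ∈ G, N.pre t s = 0) : N.preM G s = 0 :=
  Multiset.sum_eq_zero fun _ hx => by
    obtain ⟨t, ht, rfl⟩ := Multiset.mem_map.1 hx
    exact h t ht

lemma Enabled.mono (hG : N.Enabled M G) (hHG : H ≤ G) (hH : H ≠ 0) :
    N.Enabled M H :=
  ⟨hH, fun s => (preM_mono hHG s).trans (hG.2 s)⟩

lemma enabled_of_disjoint_pre (hG : G ≠ 0) (hnd : G.Nodup)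
    (hsingle : ∀ t ∈ G, N.Enabled M {t})
    (hdisj : ∀ t ∈ G, ∀ u ∈ G, t ≠ u → ∀ s, N.pre t s = 0 ∨ N.pre u s = 0) :
    N.Enabled M G := by
  refine ⟨hG, fun s => ?_⟩
  by_cases hfed : ∃ t ∈ G, N.pre t s ≠ 0
  · obtain ⟨t, ht, hts⟩ := hfed
    obtain ⟨G', rfl⟩ := Multiset.exists_cons_of_mem ht
    have htG' : t ∉ G' := (Multiset.nodup_cons.1 hnd).1
    have hrest : N.preM G' s = 0 := preM_eq_zero fun u hu =>
      (hdisj t ht u (Multiset.mem_cons_of_mem hu) (ne_of_mem_of_not_mem hu htG').symm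
        s).resolve_left hts
    have hpre := (hsingle t ht).2 s
    rw [preM_singleton] at hpre
    rw [← Multiset.singleton_add, preM_add, preM_singleton, hrest]
    omega
  · push Not at hfed
    simp [preM_eq_zero hfed]

lemma inConflict_pair_iff {t u : T} (htu : t ≠ u) (ht : N.Enabled M {t})
    (hu : N.Enabled M {u}) :
    N.InConflict M (t ::ₘ {u}) ↔ ¬ N.Enabled M (t ::ₘ {u}) := by
  refine ⟨fun hc => hc.2.2, fun hnot => ⟨by simp, fun v hv => ?_, hnot⟩⟩
  rcases Multiset.mem_cons.1 hv with rfl | hv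
  · simpa [htu] using ht
  · obtain rfl := Multiset.mem_singleton.1 hv
    simpa [htu.symm] using hu

namespace StructuralConflictNet

/-- `t` would share its non-empty preset with itself. -/
lemma not_enabled_self_pair (hN : N.StructuralConflictNet) (hM : N.Reachable M)
    (t : T) : ¬ N.Enabled M (t ::ₘ {t}) := fun hen => by
  obtain ⟨s, hs⟩ := N.pre_ne t
  exact (hN t t ⟨M, hM, hen⟩ s).elim hs hs

lemma le_one_of_enabled_replicate (hN : N.StructuralConflictNet) (hM : N.Reachable M)
    {k : ℕ} {t : T}
    (hen : N.Enabled M (Multiset.replicate k t)) : k ≤ 1 := by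
  by_contra! hk
  exact not_enabled_self_pair hN hM t
    (hen.mono ((Multiset.replicate_le_replicate t).2 hk) (by simp))

end StructuralConflictNet

end Net

theorem inConflict_iff_pairwise_conflict_general {S T : Type*} (N : Net S T)
    (hN : N.StructuralConflictNet) (M : S → ℕ) (hM : N.Reachable M)
    (G : Multiset T)
    (h : ∀ t ∈ G, N.Enabled M (Multiset.replicate (G.count t) t)) :
    N.InConflict M G ↔
      ((∀ t : T, G.count t ≤ 1) ∧
        ∃ t ∈ G, ∃ u ∈ G, t ≠ u ∧ N.InConflict M (t ::ₘ {u})) := by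
  have hset : ∀ t, G.count t ≤ 1 := fun t => by
    by_cases ht : t ∈ G
    · exact hN.le_one_of_enabled_replicate hM (h t ht)
    · simp [Multiset.count_eq_zero.2 ht]
  have hnd : G.Nodup := Multiset.nodup_iff_count_le_one.2 hset
  have hsingle : ∀ t ∈ G, N.Enabled M {t} := fun t ht => by
    simpa [Multiset.count_eq_one_of_mem hnd ht] using h t ht
  constructor
  · rintro ⟨hG, -, hnot⟩
    refine ⟨hset, ?_⟩
    by_contra! hpair
    refine hnot (Net.enabled_of_disjoint_pre hG hnd hsingle fun t ht u hu htu => ?_)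
    refine hN t u ⟨M, hM, ?_⟩
    by_contra hen
    exact hpair t ht u hu htu
      ((Net.inConflict_pair_iff htu (hsingle t ht) (hsingle u hu)).2 hen)
  · rintro ⟨-, t, ht, u, hu, htu, -, -, hnot⟩
    refine ⟨by rintro rfl; simp at ht, h, fun hen => hnot (hen.mono ?_ (by simp))⟩
    have hpair : (t ::ₘ {u}).Nodup := by simp [htu]
    exact (Multiset.le_iff_subset hpair).2 (by simp [Multiset.cons_subset, ht, hu])

/-- in a structural conflict net, a finite non-empty multiset
`G` with `M →(G↾{t})` for all `t ∈ G` is in semantic conflict in a reachable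
marking `M` iff `G` is a set and two distinct transitions of `G` are in
conflict in `M`. -/
theorem inConflict_iff_pairwise_conflict {S T : Type*} (N : Net S T)
    (hN : N.StructuralConflictNet) (M : S → ℕ) (hM : N.Reachable M)
    (G : Multiset T) (hG : G ≠ 0)
    (h : ∀ t ∈ G, N.Enabled M (Multiset.replicate (G.count t) t)) :
    N.InConflict M G ↔
      ((∀ t : T, G.count t ≤ 1) ∧
        ∃ t ∈ G, ∃ u ∈ G, t ≠ u ∧ N.InConflict M (t ::ₘ {u})) :=
  inConflict_iff_pairwise_conflict_general N hN M hM G h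
end
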